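/- arXiv:2209.04616 — 6 statements merged into one kernel-verified Lean document; each statement's English description precedes it below -/
import Mathlib

section
/- Let Σ be an invertible p×p real matrix, B a p×K real matrix, M a K×K real matrix, and d ∈ ℝ^K. If the matrix V = Σ + Σ B M Bᵀ Σ is invertible, then V⁻¹ Σ B d lies in the column space of B. -/
open Matrix

/-- if `V = Σ + Σ B M Bᵀ Σ` is invertible then `V⁻¹ Σ B d` lies in the
column space of `B`. -/
theorem stmt_3 {p K : ℕ} (Sig : Matrix (Fin p) (Fin p) ℝ) (hSig : IsUnit Sig.det)
    (B : Matrix (Fin p) (Fin K) ℝ) (M : Matrix (Fin K) (Fin K) ℝ) (d : Fin K → ℝ)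
    (V : Matrix (Fin p) (Fin p) ℝ) (hV : V = Sig + Sig * B * M * Bᵀ * Sig)
    (hVinv : IsUnit V.det) :
    ∃ u : Fin K → ℝ, V⁻¹ *ᵥ (Sig *ᵥ (B *ᵥ d)) = B *ᵥ u := by
  set x := V⁻¹ *ᵥ (Sig *ᵥ (B *ᵥ d)) with hx
  refine ⟨d - M *ᵥ (Bᵀ *ᵥ (Sig *ᵥ x)), ?_⟩
  have hVx : V *ᵥ x = Sig *ᵥ (B *ᵥ d) := by
    rw [hx, Matrix.mulVec_mulVec, Matrix.mul_nonsing_inv V hVinv, Matrix.one_mulVec]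
  have key : Sig *ᵥ x + Sig *ᵥ (B *ᵥ (M *ᵥ (Bᵀ *ᵥ (Sig *ᵥ x)))) = Sig *ᵥ (B *ᵥ d) := by
    rw [← hVx, hV, Matrix.add_mulVec]
    simp [Matrix.mulVec_mulVec, Matrix.mul_assoc]
  have hS : Sig *ᵥ x = Sig *ᵥ (B *ᵥ (d - M *ᵥ (Bᵀ *ᵥ (Sig *ᵥ x)))) := by
    rw [Matrix.mulVec_sub, Matrix.mulVec_sub, eq_sub_iff_add_eq, key]
  have := congrArg (fun v => Sig⁻¹ *ᵥ v) hS
  simpa [Matrix.mulVec_mulVec, ← Matrix.mul_assoc, Matrix.nonsing_inv_mul Sig hSig, Matrix.one_mulVec] using this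
end

section
/- Suppose Y = f(β₁ᵀX, …, β_KᵀX, ε) for a measurable f with ε independent of X and Y square-integrable, and suppose E[X | σ(BᵀX)] = μ + Σ B (BᵀΣB)⁻¹ Bᵀ (X − μ) almost surely. Then for every Borel set S ⊆ ℝ with P(Y ∈ S) > 0, the conditional covariance vector satisfies Cov(X, Y | Y ∈ S) = Σ B (BᵀΣB)⁻¹ Bᵀ Cov(X, Y | Y ∈ S); in particular Cov(X, Y | Y ∈ S) lies in the column space of Σ B. -/
/-!
Because `ε` is independent of `X`, adjoining `σ(ε)` to `σ(BᵀX)` does not change the conditional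
expectation of `X`, so `E[X | σ(BᵀX) ⊔ σ(ε)] = μ + M (X - μ)` with `M = ΣB(BᵀΣB)⁻¹Bᵀ`.
Both `Y` and the slice `{Y ∈ S}` are measurable for `σ(BᵀX) ⊔ σ(ε)`, so under `P(· | Y ∈ S)` the
covariance of `X` with `Y` equals the covariance of this conditional expectation with `Y`, which is
`M Cov(X, Y | Y ∈ S)` by bilinearity.
-/

open MeasureTheory ProbabilityTheory Matrix

namespace MeasurableSpace

variable {Ω : Type*}

lemma sup_eq_generateFrom_image2_inter (m₁ m₂ : MeasurableSpace Ω) :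
    m₁ ⊔ m₂ = generateFrom
      (Set.image2 (· ∩ ·) {s | MeasurableSet[m₁] s} {t | MeasurableSet[m₂] t}) := by
  refine le_antisymm (sup_le (fun s hs => ?_) (fun t ht => ?_)) (generateFrom_le ?_)
  · exact measurableSet_generateFrom ⟨s, hs, Set.univ, .univ, Set.inter_univ s⟩
  · exact measurableSet_generateFrom ⟨Set.univ, .univ, t, ht, Set.univ_inter t⟩
  · rintro _ ⟨s, hs, t, ht, rfl⟩
    exact (le_sup_left (b := m₂) s hs).inter (le_sup_right (a := m₁) t ht)

lemma isPiSystem_image2_inter (m₁ m₂ : MeasurableSpace Ω) :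
    IsPiSystem (Set.image2 (· ∩ ·) {s | MeasurableSet[m₁] s} {t | MeasurableSet[m₂] t}) := by
  rintro _ ⟨s, hs, t, ht, rfl⟩ _ ⟨s', hs', t', ht', rfl⟩ -
  exact ⟨s ∩ s', hs.inter hs', t ∩ t', ht.inter ht', Set.inter_inter_inter_comm s s' t t'⟩

end MeasurableSpace

namespace MeasureTheory

variable {Ω E : Type*} [NormedAddCommGroup E] [NormedSpace ℝ E] {m m₀ : MeasurableSpace Ω}
  {μ : Measure Ω}

lemma setIntegral_eq_of_isPiSystem (hm : m ≤ m₀)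
    {S : Set (Set Ω)} (h_eq : m = MeasurableSpace.generateFrom S) (h_inter : IsPiSystem S)
    {f g : Ω → E} (hf : Integrable f μ) (hg : Integrable g μ)
    (h_univ : ∫ ω, f ω ∂μ = ∫ ω, g ω ∂μ) (basic : ∀ t ∈ S, ∫ ω in t, f ω ∂μ = ∫ ω in t, g ω ∂μ)
    {t : Set Ω} (ht : MeasurableSet[m] t) : ∫ ω in t, f ω ∂μ = ∫ ω in t, g ω ∂μ := by
  induction t, ht using MeasurableSpace.induction_on_inter h_eq h_inter with
  | empty => simp
  | basic t ht => exact basic t ht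
  | compl t ht ih =>
    have hf' := integral_add_compl (hm t ht) hf
    have hg' := integral_add_compl (hm t ht) hg
    rw [ih] at hf'
    rw [← sub_eq_of_eq_add' hf'.symm, ← sub_eq_of_eq_add' hg'.symm, h_univ]
  | iUnion t htd ht ih =>
    rw [integral_iUnion (fun n => hm _ (ht n)) htd hf.integrableOn,
      integral_iUnion (fun n => hm _ (ht n)) htd hg.integrableOn]
    exact tsum_congr ih

lemma integral_condExp_mul (hm : m ≤ m₀) [SigmaFinite (μ.trim hm)] {f g : Ω → ℝ}
    (hg : StronglyMeasurable[m] g) (hfg : Integrable (f * g) μ) (hf : Integrable f μ) :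
    ∫ ω, μ[f | m] ω * g ω ∂μ = ∫ ω, f ω * g ω ∂μ := by
  calc ∫ ω, μ[f | m] ω * g ω ∂μ = ∫ ω, μ[f * g | m] ω ∂μ :=
        integral_congr_ae (condExp_mul_of_stronglyMeasurable_right hg hfg hf).symm
    _ = ∫ ω, f ω * g ω ∂μ := integral_condExp hm

lemma integral_cond_condExp_mul (hm : m ≤ m₀) [SigmaFinite (μ.trim hm)] {s : Set Ω}
    (hs : MeasurableSet[m] s) {f g : Ω → ℝ} (hg : StronglyMeasurable[m] g)
    (hfg : Integrable (f * g) μ) (hf : Integrable f μ) :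
    ∫ ω, μ[f | m] ω * g ω ∂μ[|s] = ∫ ω, f ω * g ω ∂μ[|s] := by
  simp only [ProbabilityTheory.cond, integral_smul_measure]
  congr 1
  simp only [← integral_indicator (hm s hs), Set.indicator_mul_right]
  refine integral_condExp_mul hm (hg.indicator hs) ?_ hf
  have hfg_ind : f * s.indicator g = s.indicator (f * g) :=
    funext fun ω => (Set.indicator_mul_right s f g).symm
  exact hfg_ind ▸ hfg.indicator (hm s hs)

lemma MemLp.cond {F : Type*} [NormedAddCommGroup F] {p : ENNReal} {f : Ω → F}
    (hf : MemLp f p μ) {s : Set Ω} (hs : μ s ≠ 0) : MemLp f p μ[|s] :=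
  hf.restrict s |>.smul_measure (ENNReal.inv_ne_top.2 hs)

end MeasureTheory

namespace ProbabilityTheory

variable {Ω : Type*} {m₂ mf m₀ : MeasurableSpace Ω} {μ : Measure Ω}

lemma Indep.setIntegral_inter_eq_mul (hind : Indep mf m₂ μ) (hmf : mf ≤ m₀) (h₂ : m₂ ≤ m₀)
    {g : Ω → ℝ} (hg : StronglyMeasurable[mf] g) {s t : Set Ω} (hs : MeasurableSet[mf] s)
    (ht : MeasurableSet[m₂] t) : ∫ ω in s ∩ t, g ω ∂μ = μ.real t * ∫ ω in s, g ω ∂μ := by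
  have hgs : Measurable[mf] (s.indicator g) := hg.measurable.indicator hs
  have key := Indep.setIntegral_eq_mul (f := id) h₂
    (indep_of_indep_of_le_right hind.symm hgs.comap_le)
    (hgs.mono hmf le_rfl).aemeasurable ht aestronglyMeasurable_id
  simp only [id] at key
  rw [Set.inter_comm, ← setIntegral_indicator (hmf s hs), key, integral_indicator (hmf s hs)]

end ProbabilityTheory

namespace MeasureTheory

variable {Ω : Type*} {m₁ m₂ mf m₀ : MeasurableSpace Ω} {μ : Measure Ω}

theorem condExp_sup_eq_of_indep [IsFiniteMeasure μ] (h₁ : m₁ ≤ mf) (hmf : mf ≤ m₀)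
    (h₂ : m₂ ≤ m₀) {f : Ω → ℝ} (hf : StronglyMeasurable[mf] f) (hfi : Integrable f μ)
    (hind : Indep mf m₂ μ) : μ[f | m₁ ⊔ m₂] =ᵐ[μ] μ[f | m₁] := by
  have hle : m₁ ⊔ m₂ ≤ m₀ := sup_le (h₁.trans hmf) h₂
  refine (ae_eq_condExp_of_forall_setIntegral_eq hle hfi
    (fun _ _ _ => integrable_condExp.integrableOn) (fun A hA _ => ?_)
    (stronglyMeasurable_condExp.mono (le_sup_left : m₁ ≤ m₁ ⊔ m₂)).aestronglyMeasurable).symm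
  refine setIntegral_eq_of_isPiSystem hle (MeasurableSpace.sup_eq_generateFrom_image2_inter _ _)
    (MeasurableSpace.isPiSystem_image2_inter _ _) integrable_condExp hfi
    (integral_condExp (h₁.trans hmf)) ?_ hA
  rintro _ ⟨s, hs, t, ht, rfl⟩
  rw [hind.setIntegral_inter_eq_mul hmf h₂ (stronglyMeasurable_condExp.mono h₁) (h₁ s hs) ht,
    hind.setIntegral_inter_eq_mul hmf h₂ hf (h₁ s hs) ht, setIntegral_condExp (h₁.trans hmf) hfi hs]

end MeasureTheory

namespace ProbabilityTheory

variable {Ω ι κ : Type*} [Fintype ι] {m mV mX mε m₀ : MeasurableSpace Ω} {μ : Measure Ω}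

lemma covariance_congr_ae_left {Z₁ Z₂ Y : Ω → ℝ} (h : Z₁ =ᵐ[μ] Z₂) :
    cov[Z₁, Y; μ] = cov[Z₂, Y; μ] := by
  rw [covariance, covariance, integral_congr_ae h]
  exact integral_congr_ae (by filter_upwards [h] with ω hω; rw [hω])

lemma covariance_affine_left [IsProbabilityMeasure μ] {X : Ω → ι → ℝ} {Y : Ω → ℝ}
    (hX : ∀ j, MemLp (fun ω => X ω j) 2 μ) (hY : MemLp Y 2 μ) (M : Matrix κ ι ℝ)
    (a : κ → ℝ) (b : ι → ℝ) (i : κ) :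
    cov[fun ω => a i + (M *ᵥ (X ω - b)) i, Y; μ] = (M *ᵥ fun j => cov[fun ω => X ω j, Y; μ]) i := by
  have hterm : ∀ j, MemLp (fun ω => M i j * (X ω - b) j) 2 μ := fun j =>
    ((hX j).sub (memLp_const (b j))).const_mul (M i j)
  simp only [mulVec, dotProduct]
  rw [covariance_const_add_left (X := fun ω => ∑ j, M i j * (X ω - b) j)
    ((memLp_finsetSum _ fun j _ => hterm j).integrable one_le_two),
    covariance_fun_sum_left (X := fun j ω => M i j * (X ω - b) j) hterm hY]
  refine Finset.sum_congr rfl fun j _ => ?_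
  rw [covariance_const_mul_left]
  exact congrArg _ (covariance_sub_const_left ((hX j).integrable one_le_two) (b j))

theorem covariance_cond_condExp (hm : m ≤ m₀) [IsFiniteMeasure μ] {s : Set Ω}
    (hs : MeasurableSet[m] s) (hμs : μ s ≠ 0) {Z Y : Ω → ℝ} (hY : StronglyMeasurable[m] Y)
    (hZ : MemLp Z 2 μ) (hY2 : MemLp Y 2 μ) : cov[μ[Z | m], Y; μ[|s]] = cov[Z, Y; μ[|s]] := by
  have := cond_isProbabilityMeasure (s := s) hμs
  rw [covariance_eq_sub ((hZ.condExp one_le_two).cond hμs) (hY2.cond hμs),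
    covariance_eq_sub (hZ.cond hμs) (hY2.cond hμs)]
  have hZ1 := hZ.integrable one_le_two
  have hmean := integral_cond_condExp_mul hm hs (g := 1) stronglyMeasurable_const
    (by simpa using hZ1) hZ1
  simp only [Pi.one_apply, mul_one] at hmean
  rw [hmean]
  congr 1
  exact integral_cond_condExp_mul hm hs hY (hZ.integrable_mul hY2) hZ1

theorem covariance_cond_eq_mulVec_of_condExp_eq [IsProbabilityMeasure μ] (hVX : mV ≤ mX)
    (hX_le : mX ≤ m₀) (hε : mε ≤ m₀) (hind : Indep mX mε μ) {X : Ω → ι → ℝ}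
    (hXm : ∀ j, StronglyMeasurable[mX] fun ω => X ω j) (hX2 : ∀ j, MemLp (fun ω => X ω j) 2 μ)
    {Y : Ω → ℝ} (hYm : StronglyMeasurable[mV ⊔ mε] Y) (hY2 : MemLp Y 2 μ) {s : Set Ω}
    (hs : MeasurableSet[mV ⊔ mε] s) (hμs : μ s ≠ 0) (M : Matrix ι ι ℝ) (a b : ι → ℝ)
    (hE : ∀ i, μ[fun ω => X ω i | mV] =ᵐ[μ] fun ω => a i + (M *ᵥ (X ω - b)) i) :
    (fun i => cov[fun ω => X ω i, Y; μ[|s]]) = M *ᵥ fun i => cov[fun ω => X ω i, Y; μ[|s]] := by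
  have := cond_isProbabilityMeasure (s := s) hμs
  funext i
  have hcond : μ[fun ω => X ω i | mV ⊔ mε] =ᵐ[μ[|s]] fun ω => a i + (M *ᵥ (X ω - b)) i :=
    cond_absolutelyContinuous.ae_eq <| (condExp_sup_eq_of_indep hVX hX_le hε (hXm i)
      ((hX2 i).integrable one_le_two) hind).trans (hE i)
  rw [← covariance_cond_condExp (sup_le (hVX.trans hX_le) hε) hs hμs hYm (hX2 i) hY2,
    covariance_congr_ae_left hcond,
    covariance_affine_left (fun j => (hX2 j).cond hμs) (hY2.cond hμs)]

end ProbabilityTheory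

theorem stmt_5_general {Ω : Type*} [MeasurableSpace Ω] (P : Measure Ω) [IsProbabilityMeasure P]
    {p K : ℕ} (X : Ω → Fin p → ℝ) (hX : Measurable X)
    (hX2 : ∀ i, MemLp (fun ω => X ω i) 2 P)
    (Y : Ω → ℝ) (hY2 : MemLp Y 2 P)
    (μ : Fin p → ℝ)
    (Sig : Matrix (Fin p) (Fin p) ℝ)
    (β : Fin K → (Fin p → ℝ)) (B : Matrix (Fin p) (Fin K) ℝ) (hB : ∀ i k, B i k = β k i)
    -- the model: Y = f(β₁ᵀX, …, β_KᵀX, ε) with ε independent of X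
    (f : (Fin K → ℝ) → ℝ → ℝ) (hf : Measurable fun q : (Fin K → ℝ) × ℝ => f q.1 q.2)
    (eps : Ω → ℝ) (heps : Measurable eps) (hindep : IndepFun X eps P)
    (hmodel : ∀ ω, Y ω = f (fun k => β k ⬝ᵥ X ω) (eps ω))
    -- the conditional mean formula E[X | σ(BᵀX)] = μ + ΣB(BᵀΣB)⁻¹Bᵀ(X − μ) a.s.
    (hE : ∀ i, P[(fun ω => X ω i) | MeasurableSpace.comap (fun ω => Bᵀ *ᵥ X ω) inferInstance]
      =ᵐ[P] fun ω => μ i + ((Sig * B * (Bᵀ * Sig * B)⁻¹ * Bᵀ) *ᵥ (X ω - μ)) i) :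
    ∀ (S : Set ℝ), MeasurableSet S → 0 < P (Y ⁻¹' S) →
      ∀ (μS : Fin p → ℝ), (∀ i, μS i = ∫ ω, X ω i ∂(P[|Y ⁻¹' S])) →
      ∀ (μyS : ℝ), μyS = (∫ ω, Y ω ∂(P[|Y ⁻¹' S])) →
      ∀ (CovS : Fin p → ℝ), (∀ i, CovS i = ∫ ω, (X ω i - μS i) * (Y ω - μyS) ∂(P[|Y ⁻¹' S])) →
      CovS = (Sig * B * (Bᵀ * Sig * B)⁻¹ * Bᵀ) *ᵥ CovS ∧
        ∃ u : Fin K → ℝ, CovS = (Sig * B) *ᵥ u := by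
  intro S hS hPS μS hμS μyS hμyS CovS hCovS
  have hV : Measurable[MeasurableSpace.comap X inferInstance] fun ω => Bᵀ *ᵥ X ω :=
    (continuous_const.matrix_mulVec continuous_id).measurable.comp (comap_measurable X)
  have hY : Measurable[MeasurableSpace.comap (fun ω => Bᵀ *ᵥ X ω) inferInstance ⊔
      MeasurableSpace.comap eps inferInstance] Y := by
    have hY_eq : Y = fun ω => f (Bᵀ *ᵥ X ω) (eps ω) := funext fun ω => by
      rw [hmodel]; congr 1; ext k; simp [mulVec, dotProduct, hB]
    rw [hY_eq]
    exact hf.comp (((comap_measurable _).mono le_sup_left le_rfl).prodMk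
      ((comap_measurable eps).mono le_sup_right le_rfl))
  have hCov : CovS = fun i => cov[fun ω => X ω i, Y; P[|Y ⁻¹' S]] := by
    funext i; rw [hCovS, hμS, hμyS]; rfl
  have hfix : CovS = (Sig * B * (Bᵀ * Sig * B)⁻¹ * Bᵀ) *ᵥ CovS := by
    rw [hCov]
    exact covariance_cond_eq_mulVec_of_condExp_eq hV.comap_le hX.comap_le heps.comap_le
      ((IndepFun_iff_Indep _ _ _).1 hindep)
      (fun j => ((measurable_pi_apply j).comp (comap_measurable X)).stronglyMeasurable) hX2
      hY.stronglyMeasurable hY2 (hY hS) hPS.ne' _ μ μ hE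
  refine ⟨hfix, ((Bᵀ * Sig * B)⁻¹ * Bᵀ) *ᵥ CovS, ?_⟩
  rwa [mulVec_mulVec, ← Matrix.mul_assoc]

/-- under the model `Y = f(β₁ᵀX,…,β_KᵀX, ε)` with `ε` independent of `X`
and the conditional-mean formula `E[X | σ(BᵀX)] = μ + ΣB(BᵀΣB)⁻¹Bᵀ(X − μ)` a.s., the
slice covariance satisfies `Cov(X, Y | Y ∈ S) = ΣB(BᵀΣB)⁻¹Bᵀ Cov(X, Y | Y ∈ S)`; in
particular it lies in the column space of `ΣB`. -/
theorem stmt_5 {Ω : Type*} [MeasurableSpace Ω] (P : Measure Ω) [IsProbabilityMeasure P]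
    {p K : ℕ} (X : Ω → Fin p → ℝ) (hX : Measurable X)
    (hX2 : ∀ i, MemLp (fun ω => X ω i) 2 P)
    (Y : Ω → ℝ) (hY2 : MemLp Y 2 P)
    (μ : Fin p → ℝ) (hμ : ∀ i, μ i = ∫ ω, X ω i ∂P)
    (Sig : Matrix (Fin p) (Fin p) ℝ)
    (hSig : ∀ i j, Sig i j = ∫ ω, (X ω i - μ i) * (X ω j - μ j) ∂P)
    (hSigInv : IsUnit Sig.det)
    (β : Fin K → (Fin p → ℝ)) (B : Matrix (Fin p) (Fin K) ℝ) (hB : ∀ i k, B i k = β k i)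
    (hBSB : IsUnit (Bᵀ * Sig * B).det)
    -- the model: Y = f(β₁ᵀX, …, β_KᵀX, ε) with ε independent of X
    (f : (Fin K → ℝ) → ℝ → ℝ) (hf : Measurable fun q : (Fin K → ℝ) × ℝ => f q.1 q.2)
    (eps : Ω → ℝ) (heps : Measurable eps) (hindep : IndepFun X eps P)
    (hmodel : ∀ ω, Y ω = f (fun k => β k ⬝ᵥ X ω) (eps ω))
    -- the conditional mean formula E[X | σ(BᵀX)] = μ + ΣB(BᵀΣB)⁻¹Bᵀ(X − μ) a.s.
    (hE : ∀ i, P[(fun ω => X ω i) | MeasurableSpace.comap (fun ω => Bᵀ *ᵥ X ω) inferInstance]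
      =ᵐ[P] fun ω => μ i + ((Sig * B * (Bᵀ * Sig * B)⁻¹ * Bᵀ) *ᵥ (X ω - μ)) i) :
    ∀ (S : Set ℝ), MeasurableSet S → 0 < P (Y ⁻¹' S) →
      ∀ (μS : Fin p → ℝ), (∀ i, μS i = ∫ ω, X ω i ∂(P[|Y ⁻¹' S])) →
      ∀ (μyS : ℝ), μyS = (∫ ω, Y ω ∂(P[|Y ⁻¹' S])) →
      ∀ (CovS : Fin p → ℝ), (∀ i, CovS i = ∫ ω, (X ω i - μS i) * (Y ω - μyS) ∂(P[|Y ⁻¹' S])) →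
      CovS = (Sig * B * (Bᵀ * Sig * B)⁻¹ * Bᵀ) *ᵥ CovS ∧
        ∃ u : Fin K → ℝ, CovS = (Sig * B) *ᵥ u :=
  stmt_5_general P X hX hX2 Y hY2 μ Sig β B hB f hf eps heps hindep hmodel hE
end

section
/- Suppose the linear design condition (LDC) holds: for every b ∈ ℝ^p there exist scalars a₀, a₁, …, a_K such that E[bᵀX | σ(BᵀX)] = a₀ + Σᵢ aᵢ βᵢᵀX almost surely. Then E[X | σ(BᵀX)] = μ + Σ B (BᵀΣB)⁻¹ Bᵀ (X − μ) almost surely. -/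
/-!
Apply the linear design condition to `b = eᵢ`: `E[Xᵢ | BᵀX] = a₀ + (B a)ᵀX`. Each coordinate
`βₗᵀX` of `BᵀX` is `σ(BᵀX)`-measurable, so by the pull-out property its covariance with `Xᵢ`
equals its covariance with `E[Xᵢ | BᵀX]`. These are the normal equations `BᵀΣB a = BᵀΣ eᵢ`, hence
`B a = B (BᵀΣB)⁻¹ BᵀΣ eᵢ`, the transpose of the `i`-th row of `Σ B (BᵀΣB)⁻¹ Bᵀ`; taking
expectations gives `a₀ = μᵢ - (B a)ᵀμ`.
-/

open MeasureTheory ProbabilityTheory Matrix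

noncomputable def covarianceMatrix {Ω ι : Type*} {_ : MeasurableSpace Ω} (X : Ω → ι → ℝ)
    (P : Measure Ω) : Matrix ι ι ℝ :=
  Matrix.of fun i j => cov[fun ω => X ω i, fun ω => X ω j; P]

theorem Matrix.mulVec_dotProduct_eq_of_mulVec_eq {ι κ R : Type*} [Fintype ι] [Fintype κ]
    [DecidableEq κ] [CommRing R] {S : Matrix ι ι R} (hS : Sᵀ = S) {B : Matrix ι κ R}
    (hM : IsUnit (Bᵀ * S * B).det) {a : κ → R} {b : ι → R}
    (ha : (Bᵀ * S * B) *ᵥ a = Bᵀ *ᵥ (S *ᵥ b)) (v : ι → R) :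
    (B *ᵥ a) ⬝ᵥ v = b ⬝ᵥ ((S * B * (Bᵀ * S * B)⁻¹ * Bᵀ) *ᵥ v) := by
  have ha' : a = (Bᵀ * S * B)⁻¹ *ᵥ (Bᵀ *ᵥ (S *ᵥ b)) := by
    rw [← ha, mulVec_mulVec, nonsing_inv_mul _ hM, one_mulVec]
  rw [dotProduct_mulVec, ← mulVec_transpose, ha']
  simp only [transpose_mul, transpose_transpose, transpose_nonsing_inv, hS, mulVec_mulVec,
    Matrix.mul_assoc]

section

variable {Ω ι : Type*} {mΩ : MeasurableSpace Ω} {P : Measure Ω}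

lemma ProbabilityTheory.covariance_congr_right {X Y Y' : Ω → ℝ} (h : Y =ᵐ[P] Y') :
    cov[X, Y; P] = cov[X, Y'; P] := by
  rw [covariance, covariance, integral_congr_ae h]
  exact integral_congr_ae (h.mono fun ω hω => by simp only [hω])

lemma ProbabilityTheory.covariance_condExp_right [IsProbabilityMeasure P] {m : MeasurableSpace Ω}
    (hm : m ≤ mΩ) {f g : Ω → ℝ} (hg : StronglyMeasurable[m] g) (hg2 : MemLp g 2 P)
    (hf2 : MemLp f 2 P) : cov[g, P[f|m]; P] = cov[g, f; P] := by
  rw [covariance_eq_sub hg2 (hf2.condExp one_le_two), covariance_eq_sub hg2 hf2,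
    integral_condExp hm]
  congr 1
  calc P[g * P[f|m]] = P[P[g * f|m]] := integral_congr_ae (f := g * P[f|m])
        (condExp_mul_of_stronglyMeasurable_left hg (hg2.integrable_mul hf2)
          (hf2.integrable one_le_two)).symm
    _ = P[g * f] := integral_condExp hm

variable {X : Ω → ι → ℝ}

lemma covarianceMatrix_transpose : (covarianceMatrix X P)ᵀ = covarianceMatrix X P := by
  ext i j
  exact covariance_comm _ _

variable [Fintype ι]

lemma memLp_dotProduct {p : ENNReal} (hX : ∀ i, MemLp (fun ω => X ω i) p P) (u : ι → ℝ) :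
    MemLp (fun ω => u ⬝ᵥ X ω) p P :=
  memLp_finsetSum _ fun i _ => (hX i).const_mul (u i)

lemma integrable_dotProduct (hX : ∀ i, Integrable (fun ω => X ω i) P) (u : ι → ℝ) :
    Integrable (fun ω => u ⬝ᵥ X ω) P :=
  integrable_finsetSum _ fun i _ => (hX i).const_mul (u i)

lemma integral_dotProduct (hX : ∀ i, Integrable (fun ω => X ω i) P) (u : ι → ℝ) :
    ∫ ω, u ⬝ᵥ X ω ∂P = u ⬝ᵥ fun i => ∫ ω, X ω i ∂P := by
  simp only [dotProduct]
  rw [integral_finsetSum _ fun i _ => (hX i).const_mul (u i)]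
  simp only [integral_const_mul]

lemma covariance_dotProduct_dotProduct [IsFiniteMeasure P]
    (hX : ∀ i, MemLp (fun ω => X ω i) 2 P) (u v : ι → ℝ) :
    cov[fun ω => u ⬝ᵥ X ω, fun ω => v ⬝ᵥ X ω; P] = u ⬝ᵥ (covarianceMatrix X P *ᵥ v) := by
  simp only [dotProduct]
  rw [covariance_fun_sum_fun_sum (fun i => (hX i).const_mul (u i))
    (fun j => (hX j).const_mul (v j))]
  simp only [covariance_const_mul_left, covariance_const_mul_right, mulVec, dotProduct,
    covarianceMatrix, of_apply, Finset.mul_sum]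
  exact Finset.sum_congr rfl fun i _ => Finset.sum_congr rfl fun j _ => by ring

variable {κ : Type*} [Fintype κ]

lemma comap_mulVec_le (hXm : Measurable X) (A : Matrix κ ι ℝ) :
    MeasurableSpace.comap (fun ω => A *ᵥ X ω) inferInstance ≤ mΩ := by
  have hAX : Measurable fun ω => A *ᵥ X ω := by fun_prop
  exact hAX.comap_le

variable [IsProbabilityMeasure P]

lemma mulVec_covarianceMatrix_eq_of_condExp_eq (hXm : Measurable X)
    (hX : ∀ i, MemLp (fun ω => X ω i) 2 P) (B : Matrix ι κ ℝ) {b c : ι → ℝ} {a₀ : ℝ}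
    (h : P[fun ω => b ⬝ᵥ X ω | MeasurableSpace.comap (fun ω => Bᵀ *ᵥ X ω) inferInstance]
      =ᵐ[P] fun ω => a₀ + c ⬝ᵥ X ω) :
    Bᵀ *ᵥ (covarianceMatrix X P *ᵥ c) = Bᵀ *ᵥ (covarianceMatrix X P *ᵥ b) := by
  set m := MeasurableSpace.comap (fun ω => Bᵀ *ᵥ X ω) inferInstance
  ext l
  have hg : StronglyMeasurable[m] fun ω => Bᵀ l ⬝ᵥ X ω :=
    ((measurable_pi_apply l).comp (comap_measurable fun ω => Bᵀ *ᵥ X ω)).stronglyMeasurable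
  calc (Bᵀ *ᵥ (covarianceMatrix X P *ᵥ c)) l
      = cov[fun ω => Bᵀ l ⬝ᵥ X ω, fun ω => c ⬝ᵥ X ω; P] :=
        (covariance_dotProduct_dotProduct hX _ _).symm
    _ = cov[fun ω => Bᵀ l ⬝ᵥ X ω, fun ω => a₀ + c ⬝ᵥ X ω; P] :=
        (covariance_const_add_right ((memLp_dotProduct hX c).integrable one_le_two) a₀).symm
    _ = cov[fun ω => Bᵀ l ⬝ᵥ X ω, P[fun ω => b ⬝ᵥ X ω | m]; P] := covariance_congr_right h.symm
    _ = cov[fun ω => Bᵀ l ⬝ᵥ X ω, fun ω => b ⬝ᵥ X ω; P] :=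
        covariance_condExp_right (comap_mulVec_le hXm Bᵀ) hg (memLp_dotProduct hX _)
          (memLp_dotProduct hX b)
    _ = (Bᵀ *ᵥ (covarianceMatrix X P *ᵥ b)) l := covariance_dotProduct_dotProduct hX _ _

lemma dotProduct_integral_eq_of_condExp_eq (hXm : Measurable X)
    (hX : ∀ i, Integrable (fun ω => X ω i) P) (B : Matrix ι κ ℝ) {b c : ι → ℝ} {a₀ : ℝ}
    (h : P[fun ω => b ⬝ᵥ X ω | MeasurableSpace.comap (fun ω => Bᵀ *ᵥ X ω) inferInstance]
      =ᵐ[P] fun ω => a₀ + c ⬝ᵥ X ω) :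
    b ⬝ᵥ (fun i => ∫ ω, X ω i ∂P) = a₀ + c ⬝ᵥ fun i => ∫ ω, X ω i ∂P := by
  rw [← integral_dotProduct hX, ← integral_dotProduct hX,
    ← integral_condExp (comap_mulVec_le hXm Bᵀ), integral_congr_ae h,
    integral_add (integrable_const a₀) (integrable_dotProduct hX c),
    integral_const, probReal_univ, one_smul]

theorem condExp_dotProduct_ae_eq_of_linear [DecidableEq κ] (hXm : Measurable X)
    (hX : ∀ i, MemLp (fun ω => X ω i) 2 P) {B : Matrix ι κ ℝ}
    (hM : IsUnit (Bᵀ * covarianceMatrix X P * B).det) {b : ι → ℝ} {a₀ : ℝ} {a : κ → ℝ}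
    (h : P[fun ω => b ⬝ᵥ X ω | MeasurableSpace.comap (fun ω => Bᵀ *ᵥ X ω) inferInstance]
      =ᵐ[P] fun ω => a₀ + (B *ᵥ a) ⬝ᵥ X ω) :
    P[fun ω => b ⬝ᵥ X ω | MeasurableSpace.comap (fun ω => Bᵀ *ᵥ X ω) inferInstance]
      =ᵐ[P] fun ω => b ⬝ᵥ (fun i => ∫ ω, X ω i ∂P) +
        b ⬝ᵥ ((covarianceMatrix X P * B * (Bᵀ * covarianceMatrix X P * B)⁻¹ * Bᵀ) *ᵥ
          (X ω - fun i => ∫ ω, X ω i ∂P)) := by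
  have hnormal : (Bᵀ * covarianceMatrix X P * B) *ᵥ a = Bᵀ *ᵥ (covarianceMatrix X P *ᵥ b) := by
    rw [← mulVec_mulVec, ← mulVec_mulVec]
    exact mulVec_covarianceMatrix_eq_of_condExp_eq hXm hX B h
  have hmean :=
    dotProduct_integral_eq_of_condExp_eq hXm (fun i => (hX i).integrable one_le_two) B h
  refine h.trans (Filter.Eventually.of_forall fun ω => ?_)
  dsimp only
  rw [← mulVec_dotProduct_eq_of_mulVec_eq covarianceMatrix_transpose hM hnormal, hmean,
    dotProduct_sub]
  ring

end

theorem stmt_7_general {Ω : Type*} [MeasurableSpace Ω] (P : Measure Ω) [IsProbabilityMeasure P]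
    {p K : ℕ} (X : Ω → Fin p → ℝ) (hX : Measurable X)
    (hX2 : ∀ i, MemLp (fun ω => X ω i) 2 P)
    (μ : Fin p → ℝ) (hμ : ∀ i, μ i = ∫ ω, X ω i ∂P)
    (Sig : Matrix (Fin p) (Fin p) ℝ)
    (hSig : ∀ i j, Sig i j = ∫ ω, (X ω i - μ i) * (X ω j - μ j) ∂P)
    (β : Fin K → (Fin p → ℝ)) (B : Matrix (Fin p) (Fin K) ℝ) (hB : ∀ i k, B i k = β k i)
    (hBSB : IsUnit (Bᵀ * Sig * B).det)
    (hLDC : ∀ b : Fin p → ℝ, ∃ (a₀ : ℝ) (a : Fin K → ℝ),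
      P[(fun ω => b ⬝ᵥ X ω) | MeasurableSpace.comap (fun ω => Bᵀ *ᵥ X ω) inferInstance]
        =ᵐ[P] fun ω => a₀ + ∑ k, a k * (β k ⬝ᵥ X ω)) :
    ∀ i, P[(fun ω => X ω i) | MeasurableSpace.comap (fun ω => Bᵀ *ᵥ X ω) inferInstance]
      =ᵐ[P] fun ω => μ i + ((Sig * B * (Bᵀ * Sig * B)⁻¹ * Bᵀ) *ᵥ (X ω - μ)) i := by
  intro i
  obtain ⟨a₀, a, h⟩ := hLDC (Pi.single i 1)
  have hβ : β = fun k j => B j k := funext fun k => funext fun j => (hB j k).symm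
  have hSig' : Sig = covarianceMatrix X P := by
    ext j j'
    rw [hSig, hμ, hμ]
    rfl
  have hμ' : μ = fun j => ∫ ω, X ω j ∂P := funext hμ
  subst hβ hSig' hμ'
  have h' : P[fun ω => Pi.single i 1 ⬝ᵥ X ω |
      MeasurableSpace.comap (fun ω => Bᵀ *ᵥ X ω) inferInstance]
        =ᵐ[P] fun ω => a₀ + (B *ᵥ a) ⬝ᵥ X ω := by
    refine h.trans (Filter.Eventually.of_forall fun ω => ?_)
    show _ = a₀ + (B *ᵥ a) ⬝ᵥ X ω
    rw [← vecMul_transpose, ← dotProduct_mulVec]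
    rfl
  simpa only [single_one_dotProduct] using condExp_dotProduct_ae_eq_of_linear hX hX2 hBSB h'

/-- the linear design condition implies
`E[X | σ(BᵀX)] = μ + Σ B (BᵀΣB)⁻¹ Bᵀ (X − μ)` a.s. (componentwise). -/
theorem stmt_7 {Ω : Type*} [MeasurableSpace Ω] (P : Measure Ω) [IsProbabilityMeasure P]
    {p K : ℕ} (X : Ω → Fin p → ℝ) (hX : Measurable X)
    (hX2 : ∀ i, MemLp (fun ω => X ω i) 2 P)
    (μ : Fin p → ℝ) (hμ : ∀ i, μ i = ∫ ω, X ω i ∂P)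
    (Sig : Matrix (Fin p) (Fin p) ℝ)
    (hSig : ∀ i j, Sig i j = ∫ ω, (X ω i - μ i) * (X ω j - μ j) ∂P)
    (hSigInv : IsUnit Sig.det)
    (β : Fin K → (Fin p → ℝ)) (B : Matrix (Fin p) (Fin K) ℝ) (hB : ∀ i k, B i k = β k i)
    (hBSB : IsUnit (Bᵀ * Sig * B).det)
    (hLDC : ∀ b : Fin p → ℝ, ∃ (a₀ : ℝ) (a : Fin K → ℝ),
      P[(fun ω => b ⬝ᵥ X ω) | MeasurableSpace.comap (fun ω => Bᵀ *ᵥ X ω) inferInstance]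
        =ᵐ[P] fun ω => a₀ + ∑ k, a k * (β k ⬝ᵥ X ω)) :
    ∀ i, P[(fun ω => X ω i) | MeasurableSpace.comap (fun ω => Bᵀ *ᵥ X ω) inferInstance]
      =ᵐ[P] fun ω => μ i + ((Sig * B * (Bᵀ * Sig * B)⁻¹ * Bᵀ) *ᵥ (X ω - μ)) i :=
  stmt_7_general P X hX hX2 μ hμ Sig hSig β B hB hBSB hLDC
end

section
/- Let R : ℝ → (p×p real symmetric matrices) be differentiable at 0 with R(0) = λ₁ γ₁ γ₁ᵀ, where λ₁ ≠ 0 and γ₁ ∈ ℝ^p is a unit vector. Suppose γ : ℝ → ℝ^p and λ : ℝ → ℝ are differentiable at 0 with γ(0) = γ₁, λ(0) = λ₁, and for all ε in a neighborhood of 0, ‖γ(ε)‖ = 1 and R(ε) γ(ε) = λ(ε) γ(ε). Then γ′(0) = (1/λ₁) (I_p − γ₁ γ₁ᵀ) R′(0) γ₁. -/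
/-!
Differentiating `‖γ(ε)‖² = 1` gives `γ₁ ⬝ γ′(0) = 0`, and differentiating the eigen-equation
`R(ε) γ(ε) = λ(ε) γ(ε)` gives `R′(0) γ₁ + R(0) γ′(0) = λ′(0) γ₁ + λ₁ γ′(0)`. Since `R(0)` is
the rank-one matrix `λ₁ γ₁ γ₁ᵀ`, orthogonality kills `R(0) γ′(0)`, so `R′(0) γ₁` splits into the
component `λ′(0) γ₁` along `γ₁` and the component `λ₁ γ′(0)` orthogonal to it; the projection
`I − γ₁ γ₁ᵀ` extracts the latter.
-/

open Matrix Filter Topology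

section Calculus

variable {𝕜 : Type*} [NontriviallyNormedField 𝕜] {ι κ : Type*} [Fintype ι]

theorem HasDerivAt.dotProduct {u v : 𝕜 → ι → 𝕜} {u' v' : ι → 𝕜} {t : 𝕜}
    (hu : HasDerivAt u u' t) (hv : HasDerivAt v v' t) :
    HasDerivAt (fun ε => u ε ⬝ᵥ v ε) (u' ⬝ᵥ v t + u t ⬝ᵥ v') t := by
  have hterm : ∀ i ∈ Finset.univ, HasDerivAt (fun ε => u ε i * v ε i)
      (u' i * v t i + u t i * v' i) t :=
    fun i _ => (hasDerivAt_pi.1 hu i).mul (hasDerivAt_pi.1 hv i)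
  simpa only [_root_.dotProduct, Finset.sum_add_distrib] using HasDerivAt.fun_sum hterm

theorem hasDerivAt_mulVec {A : 𝕜 → Matrix κ ι 𝕜} {A' : Matrix κ ι 𝕜} {v : 𝕜 → ι → 𝕜}
    {v' : ι → 𝕜} {t : 𝕜} (hA : ∀ i j, HasDerivAt (fun ε => A ε i j) (A' i j) t)
    (hv : HasDerivAt v v' t) :
    HasDerivAt (fun ε => A ε *ᵥ v ε) (A' *ᵥ v t + A t *ᵥ v') t :=
  hasDerivAt_pi.2 fun i => (hasDerivAt_pi.2 (hA i)).dotProduct hv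

theorem dotProduct_deriv_eq_zero_of_eventually_dotProduct_self_eq [CharZero 𝕜]
    {v : 𝕜 → ι → 𝕜} {v' : ι → 𝕜} {t c : 𝕜} (hv : HasDerivAt v v' t)
    (hconst : ∀ᶠ ε in 𝓝 t, v ε ⬝ᵥ v ε = c) :
    v t ⬝ᵥ v' = 0 := by
  have hderiv := (hasDerivAt_const t c).congr_of_eventuallyEq hconst |>.unique
    (hv.dotProduct hv)
  rw [dotProduct_comm v'] at hderiv
  linear_combination -hderiv / 2

theorem mulVec_deriv_eq_of_eventually_mulVec_eq_smul {A : 𝕜 → Matrix ι ι 𝕜}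
    {A' : Matrix ι ι 𝕜} {v : 𝕜 → ι → 𝕜} {v' : ι → 𝕜} {μ : 𝕜 → 𝕜} {μ' t : 𝕜}
    (hA : ∀ i j, HasDerivAt (fun ε => A ε i j) (A' i j) t) (hv : HasDerivAt v v' t)
    (hμ : HasDerivAt μ μ' t) (heig : ∀ᶠ ε in 𝓝 t, A ε *ᵥ v ε = μ ε • v ε) :
    A' *ᵥ v t + A t *ᵥ v' = μ' • v t + μ t • v' :=
  (((hμ.smul hv).congr_of_eventuallyEq heig).unique (hasDerivAt_mulVec hA hv)).symm.trans
    (add_comm _ _)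

end Calculus

theorem eq_smul_one_sub_vecMulVec_mulVec {K ι : Type*} [Field K] [Fintype ι] [DecidableEq ι]
    {u v w : ι → K} {a c : K} (hu : u ⬝ᵥ u = 1) (huv : u ⬝ᵥ v = 0) (hc : c ≠ 0)
    (hw : w = a • u + c • v) :
    v = (1 / c) • ((1 - vecMulVec u u) *ᵥ w) := by
  have hproj : (1 - vecMulVec u u) *ᵥ w = c • v := by
    rw [sub_mulVec, one_mulVec, vecMulVec_mulVec, hw]
    simp [dotProduct_add, dotProduct_smul, hu, huv]
  rw [hproj, smul_smul, one_div, inv_mul_cancel₀ hc, one_smul]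

theorem stmt_10_general {p : ℕ} (R : ℝ → Matrix (Fin p) (Fin p) ℝ)
    (R' : Matrix (Fin p) (Fin p) ℝ)
    (hR' : ∀ i j, HasDerivAt (fun ε => R ε i j) (R' i j) 0)
    (lam₁ : ℝ) (hlam₁ : lam₁ ≠ 0)
    (γ₁ : Fin p → ℝ) (hγ₁ : ∑ i, γ₁ i ^ 2 = 1)
    (hR0 : R 0 = lam₁ • vecMulVec γ₁ γ₁)
    (γ : ℝ → Fin p → ℝ) (γ' : Fin p → ℝ) (hγ : HasDerivAt γ γ' 0) (hγ0 : γ 0 = γ₁)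
    (lam : ℝ → ℝ) (lam' : ℝ) (hlam : HasDerivAt lam lam' 0) (hlam0 : lam 0 = lam₁)
    (heig : ∀ᶠ ε in nhds (0 : ℝ), (∑ i, γ ε i ^ 2 = 1) ∧ R ε *ᵥ γ ε = lam ε • γ ε) :
    γ' = (1 / lam₁) • ((1 - vecMulVec γ₁ γ₁) *ᵥ (R' *ᵥ γ₁)) := by
  have hunit : ∀ v : Fin p → ℝ, ∑ i, v i ^ 2 = 1 → v ⬝ᵥ v = 1 := fun v h => by
    simpa only [dotProduct, sq] using h
  have horth : γ₁ ⬝ᵥ γ' = 0 :=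
    hγ0 ▸ dotProduct_deriv_eq_zero_of_eventually_dotProduct_self_eq hγ
      (heig.mono fun _ h => hunit _ h.1)
  have hsplit : R' *ᵥ γ₁ = lam' • γ₁ + lam₁ • γ' := by
    have hlin := mulVec_deriv_eq_of_eventually_mulVec_eq_smul hR' hγ hlam
      (heig.mono fun _ h => h.2)
    rwa [hγ0, hlam0, hR0, smul_mulVec, vecMulVec_mulVec, horth, MulOpposite.op_zero,
      zero_smul, smul_zero, add_zero] at hlin
  exact eq_smul_one_sub_vecMulVec_mulVec (hunit γ₁ hγ₁) horth hlam₁ hsplit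

/-- first-order eigenvector perturbation identity for a rank-one
symmetric matrix family: `γ′(0) = (1/λ₁)(I − γ₁γ₁ᵀ) R′(0) γ₁`. -/
theorem stmt_10 {p : ℕ} (R : ℝ → Matrix (Fin p) (Fin p) ℝ)
    (R' : Matrix (Fin p) (Fin p) ℝ)
    (hsymm : ∀ ε, (R ε).IsSymm)
    (hR' : ∀ i j, HasDerivAt (fun ε => R ε i j) (R' i j) 0)
    (lam₁ : ℝ) (hlam₁ : lam₁ ≠ 0)
    (γ₁ : Fin p → ℝ) (hγ₁ : ∑ i, γ₁ i ^ 2 = 1)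
    (hR0 : R 0 = lam₁ • vecMulVec γ₁ γ₁)
    (γ : ℝ → Fin p → ℝ) (γ' : Fin p → ℝ) (hγ : HasDerivAt γ γ' 0) (hγ0 : γ 0 = γ₁)
    (lam : ℝ → ℝ) (lam' : ℝ) (hlam : HasDerivAt lam lam' 0) (hlam0 : lam 0 = lam₁)
    (heig : ∀ᶠ ε in nhds (0 : ℝ), (∑ i, γ ε i ^ 2 = 1) ∧ R ε *ᵥ γ ε = lam ε • γ ε) :
    γ' = (1 / lam₁) • ((1 - vecMulVec γ₁ γ₁) *ᵥ (R' *ᵥ γ₁)) :=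
  stmt_10_general R R' hR' lam₁ hlam₁ γ₁ hγ₁ hR0 γ γ' hγ hγ0 lam lam' hlam hlam0 heig
end

section
/- Let S₁, …, S_H be disjoint Borel subsets of ℝ covering the range of Y with w_h = P(Y ∈ S_h) > 0. Let γ₁ ∈ ℝ^p be a unit vector, P = γ₁γ₁ᵀ, β₁ = a γ₁ with a ≠ 0, b_h = c_h γ₁ for scalars c_h, and λ₁ ≠ 0. Assume: (i) Y = f(β₁ᵀX, ε) for measurable f with ε independent of X; (ii) E[X | σ(β₁ᵀX)] = μ + Σβ₁(β₁ᵀΣβ₁)⁻¹β₁ᵀ(X − μ) almost surely; (iii) Var(X | σ(β₁ᵀX)) = Σ − Σβ₁(β₁ᵀΣβ₁)⁻¹β₁ᵀΣ almost surely; and the required moments are finite. Define μ_h = E[X | Y ∈ S_h], μ_{y,h} = E[Y | Y ∈ S_h], R_h = Y − μ_{y,h} − b_hᵀ(X − μ_h), and the random vector IF = (1/λ₁) Σ_{h=1}^{H} 1{Y ∈ S_h} R_h (I_p − P) Σ⁻¹ (X − μ) (b_hᵀγ₁). Then E[IF · IFᵀ] = (1/λ₁²) Σ_{h=1}^{H}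 w_h (b_hᵀγ₁)² E[R_h² | Y ∈ S_h] (I_p − P) Σ⁻¹ (I_p − P). -/
/-!
Put `V = (I - P) Σ⁻¹ (X - μ)`. Since `(I - P) Σ⁻¹` kills `Σ β₁`, the linear design condition (ii)
makes `V` a linear image of the residual `X - E[X | β₁ᵀX]`, so by the constant conditional variance
condition (iii) the matrix `E[V Vᵀ | β₁ᵀX]` is the constant `(I - P) Σ⁻¹ (I - P)`. As `ε` is
independent of `X`, adding `ε` to the conditioning changes nothing (compare integrals over the
π-system of sets `{β₁ᵀX ∈ A, ε ∈ B}`), while in the single-index model `1{Y ∈ S_h}` and `R_h` are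
functions of `(β₁ᵀX, ε)`. The slices being disjoint, `IF IFᵀ` is a sum of slice terms
`1{Y ∈ S_h} R_h² (b_hᵀγ₁)² V Vᵀ / λ₁²`, and the expectation of each of them factors.
-/

open MeasureTheory ProbabilityTheory Matrix

section Integral

variable {Ω E : Type*} [NormedAddCommGroup E] [NormedSpace ℝ E]
  {m m0 : MeasurableSpace Ω} {μ : Measure Ω}

theorem setIntegral_eq_of_isPiSystem (hm : m ≤ m0) {S : Set (Set Ω)}
    (h_eq : m = MeasurableSpace.generateFrom S) (h_inter : IsPiSystem S) {f g : Ω → E}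
    (hf : Integrable f μ) (hg : Integrable g μ)
    (basic : ∀ t ∈ S, ∫ x in t, f x ∂μ = ∫ x in t, g x ∂μ)
    (h_univ : ∫ x, f x ∂μ = ∫ x, g x ∂μ) {t : Set Ω} (ht : MeasurableSet[m] t) :
    ∫ x in t, f x ∂μ = ∫ x in t, g x ∂μ := by
  induction t, ht using MeasurableSpace.induction_on_inter h_eq h_inter with
  | empty => simp
  | basic t ht => exact basic t ht
  | compl t ht iht =>
    rw [setIntegral_compl (hm t ht) hf, setIntegral_compl (hm t ht) hg, h_univ, iht]
  | iUnion t hdisj ht iht =>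
    rw [integral_iUnion (fun k => hm _ (ht k)) hdisj hf.integrableOn,
      integral_iUnion (fun k => hm _ (ht k)) hdisj hg.integrableOn, tsum_congr iht]

theorem MeasurableSpace.sup_eq_generateFrom_image2_inter_s13 (m₁ m₂ : MeasurableSpace Ω) :
    m₁ ⊔ m₂ = generateFrom
      (Set.image2 (· ∩ ·) {s | MeasurableSet[m₁] s} {t | MeasurableSet[m₂] t}) := by
  refine le_antisymm (sup_le ?_ ?_) (generateFrom_le ?_)
  · exact fun s hs => measurableSet_generateFrom ⟨s, hs, Set.univ, .univ, Set.inter_univ s⟩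
  · exact fun t ht => measurableSet_generateFrom ⟨Set.univ, .univ, t, ht, Set.univ_inter t⟩
  · rintro _ ⟨s, hs, t, ht, rfl⟩
    exact (le_sup_left (b := m₂) s hs).inter (le_sup_right (a := m₁) t ht)

theorem isPiSystem_image2_inter (m₁ m₂ : MeasurableSpace Ω) :
    IsPiSystem (Set.image2 (· ∩ ·) {s | MeasurableSet[m₁] s} {t | MeasurableSet[m₂] t}) := by
  rintro _ ⟨s, hs, t, ht, rfl⟩ _ ⟨s', hs', t', ht', rfl⟩ -
  exact ⟨s ∩ s', hs.inter hs', t ∩ t', ht.inter ht', Set.inter_inter_inter_comm s s' t t'⟩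

theorem setIntegral_inter_eq_measureReal_smul_of_indep [CompleteSpace E] [IsFiniteMeasure μ]
    {m₁ m₂ : MeasurableSpace Ω} (h₁ : m₁ ≤ m0) (h₂ : m₂ ≤ m0) (hind : Indep m₁ m₂ μ)
    {f : Ω → E} (hf : StronglyMeasurable[m₁] f) (hfi : Integrable f μ) {A B : Set Ω}
    (hA : MeasurableSet[m₁] A) (hB : MeasurableSet[m₂] B) :
    ∫ x in A ∩ B, f x ∂μ = μ.real B • ∫ x in A, f x ∂μ := by
  rw [Set.inter_comm, ← setIntegral_indicator (h₁ A hA),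
    ← setIntegral_condExp h₂ (hfi.indicator (h₁ A hA)) hB,
    setIntegral_congr_ae (h₂ B hB) ((condExp_indep_eq h₁ h₂ (hf.indicator hA) hind).mono
      fun _ h _ => h), setIntegral_const, integral_indicator (h₁ A hA)]

theorem condExp_sup_indep_ae_eq [CompleteSpace E] [IsFiniteMeasure μ] {mX mε : MeasurableSpace Ω}
    (hmX : m ≤ mX) (hX : mX ≤ m0) (hε : mε ≤ m0) (hind : Indep mX mε μ) {f : Ω → E}
    (hf : StronglyMeasurable[mX] f) (hfi : Integrable f μ) :
    μ[f | m ⊔ mε] =ᵐ[μ] μ[f | m] := by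
  have hsup : m ⊔ mε ≤ m0 := sup_le (hmX.trans hX) hε
  have hcond : StronglyMeasurable[mX] (μ[f | m]) := stronglyMeasurable_condExp.mono hmX
  refine (ae_eq_condExp_of_forall_setIntegral_eq hsup hfi
    (fun s _ _ => integrable_condExp.integrableOn) (fun s hs _ => ?_)
    (stronglyMeasurable_condExp.mono le_sup_left).aestronglyMeasurable).symm
  refine setIntegral_eq_of_isPiSystem hsup (MeasurableSpace.sup_eq_generateFrom_image2_inter_s13 m mε)
    (isPiSystem_image2_inter m mε) integrable_condExp hfi ?_ (integral_condExp (hmX.trans hX)) hs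
  rintro _ ⟨A, hA, B, hB, rfl⟩
  rw [setIntegral_inter_eq_measureReal_smul_of_indep hX hε hind hcond integrable_condExp
      (hmX A hA) hB, setIntegral_inter_eq_measureReal_smul_of_indep hX hε hind hf hfi (hmX A hA) hB,
    setIntegral_condExp (hmX.trans hX) hfi hA]

theorem condExp_comp_sup_comap_ae_eq_of_indepFun [CompleteSpace E] [IsFiniteMeasure μ]
    {β δ ζ : Type*} [MeasurableSpace β] [MeasurableSpace δ] [MeasurableSpace ζ] {X : Ω → β}
    {ε : Ω → ζ} (hX : Measurable X) (hε : Measurable ε) (hind : IndepFun X ε μ) {L : β → δ}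
    (hL : Measurable L) {ψ : β → E} (hψ : StronglyMeasurable ψ)
    (hψX : Integrable (fun ω => ψ (X ω)) μ) :
    μ[fun ω => ψ (X ω) | MeasurableSpace.comap (fun ω => L (X ω)) inferInstance ⊔
        MeasurableSpace.comap ε inferInstance] =ᵐ[μ]
      μ[fun ω => ψ (X ω) | MeasurableSpace.comap (fun ω => L (X ω)) inferInstance] :=
  condExp_sup_indep_ae_eq (hL.comp (comap_measurable X)).comap_le hX.comap_le hε.comap_le
    ((IndepFun_iff_Indep X ε μ).1 hind) (hψ.comp_measurable (comap_measurable X)) hψX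

theorem setIntegral_eq_measureReal_smul_integral_cond [IsFiniteMeasure μ] (s : Set Ω)
    (f : Ω → E) : ∫ x in s, f x ∂μ = μ.real s • ∫ x, f x ∂μ[|s] := by
  rw [ProbabilityTheory.cond, integral_smul_measure, smul_smul, ENNReal.toReal_inv,
    ← measureReal_def]
  by_cases hs : μ.real s = 0
  · rw [Measure.restrict_eq_zero.2 ((measureReal_eq_zero_iff).1 hs)]
    simp
  · rw [mul_inv_cancel₀ hs, one_smul]

theorem integral_mul_eq_of_condExp_ae_eq_const [IsFiniteMeasure μ] (hm : m ≤ m0) {g Z : Ω → ℝ}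
    {c : ℝ} (hc : μ[g | m] =ᵐ[μ] fun _ => c) (hg : Integrable g μ)
    (hZ : StronglyMeasurable[m] Z) (hZg : Integrable (fun ω => Z ω * g ω) μ) :
    ∫ ω, Z ω * g ω ∂μ = c * ∫ ω, Z ω ∂μ := by
  calc ∫ ω, Z ω * g ω ∂μ = ∫ ω, (μ[Z * g | m]) ω ∂μ := (integral_condExp hm).symm
    _ = ∫ ω, Z ω * c ∂μ := by
      refine integral_congr_ae ((condExp_mul_of_stronglyMeasurable_left hZ hZg hg).trans ?_)
      filter_upwards [hc] with ω hω
      simp [hω]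
    _ = c * ∫ ω, Z ω ∂μ := by rw [integral_mul_const, mul_comm]

end Integral

section Slices

variable {ι α : Type*} [Fintype ι] {s : ι → Set α}

theorem indicator_one_mul_sum_indicator_one_mul (hs : Pairwise (Function.onFun Disjoint s))
    (t : ι → ℝ) (i : ι) (x : α) :
    (s i).indicator (fun _ => (1 : ℝ)) x * ∑ j, (s j).indicator (fun _ => (1 : ℝ)) x * t j =
      (s i).indicator (fun _ => (1 : ℝ)) x * t i := by
  by_cases hx : x ∈ s i
  · have hj : ∀ j ≠ i, x ∉ s j := fun j hji hxj => Set.disjoint_left.1 (hs hji) hxj hx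
    rw [Finset.sum_eq_single i (fun j _ hji => by simp [hj j hji]) (by simp)]
    simp [hx]
  · simp [hx]

theorem sum_indicator_one_mul_mul_sum_indicator_one_mul
    (hs : Pairwise (Function.onFun Disjoint s)) (u v : ι → ℝ) (x : α) :
    (∑ i, (s i).indicator (fun _ => (1 : ℝ)) x * u i) *
        ∑ i, (s i).indicator (fun _ => (1 : ℝ)) x * v i =
      ∑ i, (s i).indicator (fun _ => (1 : ℝ)) x * (u i * v i) := by
  rw [Finset.sum_mul]
  refine Finset.sum_congr rfl fun i _ => ?_
  rw [mul_right_comm, indicator_one_mul_sum_indicator_one_mul hs]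
  ring

variable {m m0 : MeasurableSpace α} {μ : Measure α}

theorem integral_sum_indicator_one_mul_of_condExp_ae_eq_const [IsFiniteMeasure μ]
    (hm : m ≤ m0) (hs : ∀ i, MeasurableSet[m] (s i)) (hdisj : Pairwise (Function.onFun Disjoint s))
    {g : α → ℝ} {c : ℝ} (hc : μ[g | m] =ᵐ[μ] fun _ => c) (hg : Integrable g μ)
    {Z : ι → α → ℝ} (hZ : ∀ i, StronglyMeasurable[m] (Z i))
    (hint : Integrable (fun x => ∑ i, (s i).indicator (fun _ => (1 : ℝ)) x * (Z i x * g x)) μ) :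
    ∫ x, ∑ i, (s i).indicator (fun _ => (1 : ℝ)) x * (Z i x * g x) ∂μ =
      c * ∑ i, ∫ x in s i, Z i x ∂μ := by
  have hterm : ∀ i, (fun x => (s i).indicator (fun _ => (1 : ℝ)) x * (Z i x * g x)) =
      fun x => (s i).indicator (Z i) x * g x := by
    intro i; funext x
    by_cases hx : x ∈ s i <;> simp [hx]
  have hterm_int : ∀ i, Integrable (fun x => (s i).indicator (Z i) x * g x) μ := by
    intro i
    refine ((hint.indicator (hm _ (hs i))).congr (Filter.Eventually.of_forall fun x => ?_))
    rw [← hterm]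
    show _ = (s i).indicator (fun _ => (1 : ℝ)) x * (Z i x * g x)
    rw [← indicator_one_mul_sum_indicator_one_mul hdisj (fun j => Z j x * g x) i x]
    by_cases hx : x ∈ s i <;> simp [hx]
  rw [integral_finsetSum _ fun i _ => hterm i ▸ hterm_int i, Finset.mul_sum]
  refine Finset.sum_congr rfl fun i _ => ?_
  rw [hterm, integral_mul_eq_of_condExp_ae_eq_const hm hc hg ((hZ i).indicator (hs i))
    (hterm_int i), integral_indicator (hm _ (hs i))]

end Slices

section Matrix

variable {ι n : Type*} [Fintype n]

theorem vecMulVec_self_mulVec_self {γ : n → ℝ} (hγ : γ ⬝ᵥ γ = 1) : vecMulVec γ γ *ᵥ γ = γ := by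
  rw [vecMulVec_mulVec, hγ]
  simp

theorem mul_sub_smul_vecMulVec_mul_transpose {A : Matrix ι n ℝ} {s : n → ℝ} (hAs : A *ᵥ s = 0)
    (C : Matrix n n ℝ) (κ : ℝ) : A * (C - κ • vecMulVec s s) * Aᵀ = A * C * Aᵀ := by
  rw [Matrix.mul_sub, Matrix.sub_mul, Matrix.mul_smul, Matrix.smul_mul, mul_vecMulVec, hAs]
  simp

variable [DecidableEq n]

theorem mul_inv_mul_mul_inv_transpose {Q C : Matrix n n ℝ} (hQ : Qᵀ = Q) (hC : Cᵀ = C)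
    (hdet : IsUnit C.det) : Q * C⁻¹ * C * (Q * C⁻¹)ᵀ = Q * C⁻¹ * Q := by
  rw [transpose_mul, transpose_nonsing_inv, hC, hQ, Matrix.mul_assoc (Q * C⁻¹),
    ← Matrix.mul_assoc C, mul_nonsing_inv C hdet, Matrix.one_mul]

end Matrix

theorem Matrix.isSymm_of_forall_eq_integral_mul {Ω n : Type*} [MeasurableSpace Ω]
    {μ : Measure Ω} {Z : Ω → n → ℝ} {C : Matrix n n ℝ}
    (hC : ∀ k l, C k l = ∫ ω, Z ω k * Z ω l ∂μ) : C.IsSymm := by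
  ext k l
  simp only [transpose_apply, hC]
  exact integral_congr_ae (Filter.Eventually.of_forall fun ω => mul_comm _ _)

section CondCov

variable {Ω ι n : Type*} [Fintype n] {m m0 : MeasurableSpace Ω} {μ : Measure Ω}

theorem MemLp.mulVec_apply {p : ENNReal} {X : Ω → n → ℝ} (hX : ∀ k, MemLp (fun ω => X ω k) p μ)
    (A : Matrix ι n ℝ) (i : ι) : MemLp (fun ω => (A *ᵥ X ω) i) p μ := by
  simpa only [mulVec, dotProduct] using memLp_finsetSum _ fun k _ => (hX k).const_mul (A i k)

theorem condExp_mulVec_mul_mulVec_ae_eq {φ : Ω → n → ℝ} {C : Matrix n n ℝ}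
    (hφ : ∀ k l, Integrable (fun ω => φ ω k * φ ω l) μ)
    (hC : ∀ k l, μ[fun ω => φ ω k * φ ω l | m] =ᵐ[μ] fun _ => C k l)
    (A B : Matrix ι n ℝ) (i j : ι) :
    μ[fun ω => (A *ᵥ φ ω) i * (B *ᵥ φ ω) j | m] =ᵐ[μ] fun _ => (A * C * Bᵀ) i j := by
  have hexpand : (fun ω => (A *ᵥ φ ω) i * (B *ᵥ φ ω) j) =
      ∑ q : n × n, (A i q.1 * B j q.2) • fun ω => φ ω q.1 * φ ω q.2 := by
    funext ω
    simp only [mulVec, dotProduct, Finset.sum_mul_sum, Fintype.sum_prod_type, Finset.sum_apply,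
      Pi.smul_apply, smul_eq_mul]
    exact Finset.sum_congr rfl fun k _ => Finset.sum_congr rfl fun l _ => by ring
  have hterm : ∀ q : n × n, μ[(A i q.1 * B j q.2) • fun ω => φ ω q.1 * φ ω q.2 | m]
      =ᵐ[μ] fun _ => A i q.1 * B j q.2 * C q.1 q.2 := fun q =>
    (condExp_smul _ _ m).trans <| (hC q.1 q.2).mono fun ω hω => by simp [hω]
  rw [hexpand]
  refine (condExp_finsetSum (fun q _ => (hφ q.1 q.2).smul _) m).trans ?_
  filter_upwards [ae_all_iff.2 hterm] with ω hω
  simp only [Finset.sum_apply, hω, Matrix.mul_apply, transpose_apply, Finset.sum_mul,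
    Fintype.sum_prod_type]
  rw [Finset.sum_comm]
  exact Finset.sum_congr rfl fun k _ => Finset.sum_congr rfl fun l _ => by ring

theorem condExp_mulVec_sub_mul_mulVec_sub_ae_eq [IsFiniteMeasure μ] {X : Ω → n → ℝ}
    (hX : ∀ k, MemLp (fun ω => X ω k) 2 μ) {c s : n → ℝ} {ℓ : Ω → ℝ} {C : Matrix n n ℝ}
    (hmean : ∀ k, μ[fun ω => X ω k | m] =ᵐ[μ] fun ω => c k + ℓ ω * s k)
    (hcov : ∀ k l, μ[fun ω => (X ω k - μ[fun ω' => X ω' k | m] ω) *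
        (X ω l - μ[fun ω' => X ω' l | m] ω) | m] =ᵐ[μ] fun _ => C k l)
    {A : Matrix ι n ℝ} (hAs : A *ᵥ s = 0) (i j : ι) :
    μ[fun ω => (A *ᵥ (X ω - c)) i * (A *ᵥ (X ω - c)) j | m] =ᵐ[μ]
      fun _ => (A * C * Aᵀ) i j := by
  set φ : Ω → n → ℝ := fun ω k => X ω k - μ[fun ω' => X ω' k | m] ω with hφ
  have hφL2 : ∀ k, MemLp (fun ω => φ ω k) 2 μ := fun k => (hX k).sub ((hX k).condExp one_le_two)
  have hAφ : ∀ᵐ ω ∂μ, A *ᵥ (X ω - c) = A *ᵥ φ ω := by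
    filter_upwards [ae_all_iff.2 hmean] with ω hω
    have hφω : φ ω = (X ω - c) - ℓ ω • s := by
      funext k
      simp only [hφ, hω k, Pi.sub_apply, Pi.smul_apply, smul_eq_mul]
      ring
    rw [hφω, mulVec_sub A (X ω - c), mulVec_smul, hAs, smul_zero, sub_zero]
  refine (condExp_congr_ae ?_).trans <| condExp_mulVec_mul_mulVec_ae_eq
    (fun k l => (hφL2 k).integrable_mul (hφL2 l)) hcov A A i j
  filter_upwards [hAφ] with ω hω
  rw [hω]

theorem condExp_mulVec_mul_mulVec_ae_eq_of_linearDesign [DecidableEq n] [IsFiniteMeasure μ]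
    {X : Ω → n → ℝ} (hX : ∀ k, MemLp (fun ω => X ω k) 2 μ) {Sig : Matrix n n ℝ} (hSig : Sig.IsSymm)
    (hdet : IsUnit Sig.det) {γ β c : n → ℝ} {a κ : ℝ} {ℓ : Ω → ℝ} (hγ : γ ⬝ᵥ γ = 1)
    (hβ : β = a • γ) (hmean : ∀ k, μ[fun ω => X ω k | m] =ᵐ[μ] fun ω => c k + ℓ ω * (Sig *ᵥ β) k)
    (hcov : ∀ k l, μ[fun ω => (X ω k - μ[fun ω' => X ω' k | m] ω) *
        (X ω l - μ[fun ω' => X ω' l | m] ω) | m] =ᵐ[μ]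
      fun _ => Sig k l - κ * (Sig *ᵥ β) k * (Sig *ᵥ β) l) (i j : n) :
    μ[fun ω => (((1 - vecMulVec γ γ) * Sig⁻¹) *ᵥ (X ω - c)) i *
        (((1 - vecMulVec γ γ) * Sig⁻¹) *ᵥ (X ω - c)) j | m] =ᵐ[μ]
      fun _ => ((1 - vecMulVec γ γ) * Sig⁻¹ * (1 - vecMulVec γ γ)) i j := by
  set σ := Sig *ᵥ β
  have hAσ : ((1 - vecMulVec γ γ) * Sig⁻¹) *ᵥ σ = 0 := by
    rw [mulVec_mulVec, Matrix.mul_assoc, nonsing_inv_mul _ hdet, Matrix.mul_one, hβ, mulVec_smul,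
      sub_mulVec, one_mulVec, vecMulVec_self_mulVec_self hγ, sub_self, smul_zero]
  refine (condExp_mulVec_sub_mul_mulVec_sub_ae_eq hX hmean
    (C := Sig - κ • vecMulVec σ σ) (fun k l => (hcov k l).trans ?_) hAσ i j).trans ?_
  · exact Filter.EventuallyEq.of_eq (funext fun _ => by simp [vecMulVec_apply, mul_assoc])
  · rw [mul_sub_smul_vecMulVec_mul_transpose hAσ, mul_inv_mul_mul_inv_transpose
      (by rw [transpose_sub, transpose_one, transpose_vecMulVec]) hSig.eq hdet]

end CondCov

section SingleIndex

theorem measurable_comap_sup_comap_of_eq_comp {Ω α β γ : Type*} [MeasurableSpace α]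
    [MeasurableSpace β] [MeasurableSpace γ] {T : Ω → α} {ε : Ω → β} {f : α → β → γ}
    (hf : Measurable fun q : α × β => f q.1 q.2) {Y : Ω → γ} (hY : ∀ ω, Y ω = f (T ω) (ε ω)) :
    Measurable[MeasurableSpace.comap T inferInstance ⊔
      MeasurableSpace.comap ε inferInstance] Y := by
  rw [funext hY]
  exact hf.comp (((comap_measurable T).mono le_sup_left le_rfl).prodMk
    ((comap_measurable ε).mono le_sup_right le_rfl))

theorem measurable_sub_sub_smul_dotProduct_sub {Ω n : Type*} [Fintype n] {m : MeasurableSpace Ω}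
    {X : Ω → n → ℝ} {Y : Ω → ℝ} {β γ : n → ℝ} {a : ℝ} (ha : a ≠ 0) (hβ : β = a • γ)
    (hY : Measurable[m] Y) (hT : Measurable[m] fun ω => β ⬝ᵥ X ω) (u c : ℝ) (v : n → ℝ) :
    Measurable[m] fun ω => Y ω - u - (c • γ) ⬝ᵥ (X ω - v) := by
  have h : ∀ ω, (c • γ) ⬝ᵥ (X ω - v) = c / a * (β ⬝ᵥ X ω) - c * (γ ⬝ᵥ v) := by
    intro ω
    simp only [hβ, smul_dotProduct, dotProduct_sub, smul_eq_mul]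
    field_simp
  simp_rw [h]
  exact (hY.sub_const u).sub ((hT.const_mul _).sub_const _)

end SingleIndex

theorem stmt_13_general {Ω : Type*} [MeasurableSpace Ω] (P : Measure Ω) [IsProbabilityMeasure P]
    {p H : ℕ} (X : Ω → Fin p → ℝ) (hX : Measurable X)
    (hX2 : ∀ i, MemLp (fun ω => X ω i) 2 P)
    (Y : Ω → ℝ)
    (μ : Fin p → ℝ)
    (Sig : Matrix (Fin p) (Fin p) ℝ)
    (hSig : ∀ i j, Sig i j = ∫ ω, (X ω i - μ i) * (X ω j - μ j) ∂P)
    (hSigInv : IsUnit Sig.det)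
    -- disjoint slices covering the range of Y, with weights w_h = P(Y ∈ S_h) > 0
    (S : Fin H → Set ℝ) (hSm : ∀ h, MeasurableSet (S h))
    (hdisj : Pairwise (Function.onFun Disjoint S))
    (w : Fin H → ℝ) (hw : ∀ h, w h = (P (Y ⁻¹' S h)).toReal)
    -- γ₁ unit, projection Pm = γ₁γ₁ᵀ, β₁ = a γ₁ (a ≠ 0), b_h = c_h γ₁, λ₁ ≠ 0
    (γ₁ : Fin p → ℝ) (hγ₁ : γ₁ ⬝ᵥ γ₁ = 1)
    (Pm : Matrix (Fin p) (Fin p) ℝ) (hPm : Pm = vecMulVec γ₁ γ₁)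
    (a : ℝ) (ha : a ≠ 0) (β₁ : Fin p → ℝ) (hβ₁ : β₁ = a • γ₁)
    (c : Fin H → ℝ) (b : Fin H → (Fin p → ℝ)) (hb : ∀ h, b h = c h • γ₁)
    (lam₁ : ℝ)
    -- (i) the single-index model with ε independent of X
    (f : ℝ → ℝ → ℝ) (hf : Measurable fun q : ℝ × ℝ => f q.1 q.2)
    (eps : Ω → ℝ) (heps : Measurable eps) (hindep : IndepFun X eps P)
    (hmodel : ∀ ω, Y ω = f (β₁ ⬝ᵥ X ω) (eps ω))
    -- (ii) E[X | σ(β₁ᵀX)] = μ + Σβ₁(β₁ᵀΣβ₁)⁻¹β₁ᵀ(X − μ) a.s.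
    (hii : ∀ i, P[(fun ω => X ω i) | MeasurableSpace.comap (fun ω => β₁ ⬝ᵥ X ω) inferInstance]
      =ᵐ[P] fun ω => μ i + (β₁ ⬝ᵥ (Sig *ᵥ β₁))⁻¹ * (β₁ ⬝ᵥ (X ω - μ)) * (Sig *ᵥ β₁) i)
    -- (iii) Var(X | σ(β₁ᵀX)) = Σ − Σβ₁(β₁ᵀΣβ₁)⁻¹β₁ᵀΣ a.s.
    (hiii : ∀ i j,
      P[(fun ω =>
          (X ω i - (P[(fun ω' => X ω' i) |
            MeasurableSpace.comap (fun ω'' => β₁ ⬝ᵥ X ω'') inferInstance]) ω) *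
          (X ω j - (P[(fun ω' => X ω' j) |
            MeasurableSpace.comap (fun ω'' => β₁ ⬝ᵥ X ω'') inferInstance]) ω)) |
        MeasurableSpace.comap (fun ω'' => β₁ ⬝ᵥ X ω'') inferInstance]
      =ᵐ[P] fun _ => Sig i j - (β₁ ⬝ᵥ (Sig *ᵥ β₁))⁻¹ * (Sig *ᵥ β₁) i * (Sig *ᵥ β₁) j)
    -- slice conditional means, residuals and the influence function
    (μh : Fin H → Fin p → ℝ)
    (μyh : Fin H → ℝ)
    (Rh : Fin H → Ω → ℝ) (hRh : ∀ h ω, Rh h ω = Y ω - μyh h - b h ⬝ᵥ (X ω - μh h))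
    (IF : Ω → Fin p → ℝ)
    (hIF : ∀ ω, IF ω = (1 / lam₁) •
      ∑ h, (((Y ⁻¹' S h).indicator (fun _ => (1 : ℝ)) ω) * Rh h ω * (b h ⬝ᵥ γ₁)) •
        ((1 - Pm) *ᵥ (Sig⁻¹ *ᵥ (X ω - μ))))
    -- the required moments are finite
    (hIFint : ∀ i j, Integrable (fun ω => IF ω i * IF ω j) P) :
    ∀ i j, (∫ ω, IF ω i * IF ω j ∂P) =
      (1 / lam₁ ^ 2) * ∑ h, w h * (b h ⬝ᵥ γ₁) ^ 2 * (∫ ω, Rh h ω ^ 2 ∂(P[|Y ⁻¹' S h])) *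
        (((1 - Pm) * Sig⁻¹ * (1 - Pm)) i j) := by
  intro i j
  subst hPm
  set T : Ω → ℝ := fun ω => β₁ ⬝ᵥ X ω
  set A := (1 - vecMulVec γ₁ γ₁) * Sig⁻¹
  set g : Ω → ℝ := fun ω => (A *ᵥ (X ω - μ)) i * (A *ᵥ (X ω - μ)) j
  have hL : Measurable fun x : Fin p → ℝ => β₁ ⬝ᵥ x := by fun_prop
  have hXc : ∀ k, MemLp (fun ω => (X ω - μ) k) 2 P := fun k => (hX2 k).sub (memLp_const (μ k))
  have hg : Integrable g P :=
    (MemLp.mulVec_apply hXc A i).integrable_mul (MemLp.mulVec_apply hXc A j)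
  have hcond : P[g | MeasurableSpace.comap T inferInstance ⊔
      MeasurableSpace.comap eps inferInstance] =ᵐ[P]
        fun _ => ((1 - vecMulVec γ₁ γ₁) * Sig⁻¹ * (1 - vecMulVec γ₁ γ₁)) i j :=
    (condExp_comp_sup_comap_ae_eq_of_indepFun hX heps hindep hL
      (by fun_prop : Continuous fun x => (A *ᵥ (x - μ)) i * (A *ᵥ (x - μ)) j).stronglyMeasurable
      hg).trans (condExp_mulVec_mul_mulVec_ae_eq_of_linearDesign hX2
        (Matrix.isSymm_of_forall_eq_integral_mul hSig) hSigInv hγ₁ hβ₁ hii hiii i j)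
  have hY := measurable_comap_sup_comap_of_eq_comp hf hmodel
  have hR : ∀ h, Measurable[MeasurableSpace.comap T inferInstance ⊔
      MeasurableSpace.comap eps inferInstance] (Rh h) := fun h => by
    rw [funext (hRh h), hb h]
    exact measurable_sub_sub_smul_dotProduct_sub ha hβ₁ hY
      ((comap_measurable T).mono le_sup_left le_rfl) _ _ _
  have hslices : Pairwise (Function.onFun Disjoint fun h => Y ⁻¹' S h) :=
    hdisj.mono fun _ _ hd => hd.preimage Y
  have hIF' : ∀ ω, IF ω i * IF ω j = ∑ h, (Y ⁻¹' S h).indicator (fun _ => (1 : ℝ)) ω *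
      ((1 / lam₁ ^ 2 * (b h ⬝ᵥ γ₁) ^ 2 * Rh h ω ^ 2) * g ω) := by
    intro ω
    have hIFr : ∀ r, IF ω r = 1 / lam₁ * ∑ h, (Y ⁻¹' S h).indicator (fun _ => (1 : ℝ)) ω *
        (Rh h ω * (b h ⬝ᵥ γ₁) * (A *ᵥ (X ω - μ)) r) := fun r => by
      simp only [hIF, Pi.smul_apply, Finset.sum_apply, smul_eq_mul, mulVec_mulVec, A, mul_assoc]
    rw [hIFr, hIFr, mul_mul_mul_comm, sum_indicator_one_mul_mul_sum_indicator_one_mul hslices,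
      Finset.mul_sum]
    exact Finset.sum_congr rfl fun h _ => by ring
  rw [integral_congr_ae (Filter.Eventually.of_forall hIF'),
    integral_sum_indicator_one_mul_of_condExp_ae_eq_const
      (sup_le (hL.comp hX).comap_le heps.comap_le) (fun h => hY (hSm h)) hslices hcond hg
      (fun h => (((hR h).pow_const 2).const_mul _).stronglyMeasurable)
      ((hIFint i j).congr (Filter.Eventually.of_forall hIF')), Finset.mul_sum, Finset.mul_sum]
  refine Finset.sum_congr rfl fun h _ => ?_
  rw [integral_const_mul, setIntegral_eq_measureReal_smul_integral_cond, hw h, smul_eq_mul,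
    measureReal_def]
  ring

/-- Theorem 3 of the paper: the asymptotic variance formula
`E[IF·IFᵀ] = (1/λ₁²) Σ_h w_h (b_hᵀγ₁)² E[R_h² | Y ∈ S_h] (I − P)Σ⁻¹(I − P)` for the
SWAR e.d.r. direction influence function in the single-index model. -/
theorem stmt_13 {Ω : Type*} [MeasurableSpace Ω] (P : Measure Ω) [IsProbabilityMeasure P]
    {p H : ℕ} (X : Ω → Fin p → ℝ) (hX : Measurable X)
    (hX2 : ∀ i, MemLp (fun ω => X ω i) 2 P)
    (Y : Ω → ℝ) (hY2 : MemLp Y 2 P)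
    (μ : Fin p → ℝ) (hμ : ∀ i, μ i = ∫ ω, X ω i ∂P)
    (Sig : Matrix (Fin p) (Fin p) ℝ)
    (hSig : ∀ i j, Sig i j = ∫ ω, (X ω i - μ i) * (X ω j - μ j) ∂P)
    (hSigInv : IsUnit Sig.det)
    -- disjoint slices covering the range of Y, with weights w_h = P(Y ∈ S_h) > 0
    (S : Fin H → Set ℝ) (hSm : ∀ h, MeasurableSet (S h))
    (hdisj : Pairwise (Function.onFun Disjoint S))
    (hcover : ∀ ω, ∃ h, Y ω ∈ S h)
    (w : Fin H → ℝ) (hw : ∀ h, w h = (P (Y ⁻¹' S h)).toReal) (hwpos : ∀ h, 0 < w h)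
    -- γ₁ unit, projection Pm = γ₁γ₁ᵀ, β₁ = a γ₁ (a ≠ 0), b_h = c_h γ₁, λ₁ ≠ 0
    (γ₁ : Fin p → ℝ) (hγ₁ : γ₁ ⬝ᵥ γ₁ = 1)
    (Pm : Matrix (Fin p) (Fin p) ℝ) (hPm : Pm = vecMulVec γ₁ γ₁)
    (a : ℝ) (ha : a ≠ 0) (β₁ : Fin p → ℝ) (hβ₁ : β₁ = a • γ₁)
    (c : Fin H → ℝ) (b : Fin H → (Fin p → ℝ)) (hb : ∀ h, b h = c h • γ₁)
    (lam₁ : ℝ) (hlam₁ : lam₁ ≠ 0)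
    -- (i) the single-index model with ε independent of X
    (f : ℝ → ℝ → ℝ) (hf : Measurable fun q : ℝ × ℝ => f q.1 q.2)
    (eps : Ω → ℝ) (heps : Measurable eps) (hindep : IndepFun X eps P)
    (hmodel : ∀ ω, Y ω = f (β₁ ⬝ᵥ X ω) (eps ω))
    -- (ii) E[X | σ(β₁ᵀX)] = μ + Σβ₁(β₁ᵀΣβ₁)⁻¹β₁ᵀ(X − μ) a.s.
    (hii : ∀ i, P[(fun ω => X ω i) | MeasurableSpace.comap (fun ω => β₁ ⬝ᵥ X ω) inferInstance]
      =ᵐ[P] fun ω => μ i + (β₁ ⬝ᵥ (Sig *ᵥ β₁))⁻¹ * (β₁ ⬝ᵥ (X ω - μ)) * (Sig *ᵥ β₁) i)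
    -- (iii) Var(X | σ(β₁ᵀX)) = Σ − Σβ₁(β₁ᵀΣβ₁)⁻¹β₁ᵀΣ a.s.
    (hiii : ∀ i j,
      P[(fun ω =>
          (X ω i - (P[(fun ω' => X ω' i) |
            MeasurableSpace.comap (fun ω'' => β₁ ⬝ᵥ X ω'') inferInstance]) ω) *
          (X ω j - (P[(fun ω' => X ω' j) |
            MeasurableSpace.comap (fun ω'' => β₁ ⬝ᵥ X ω'') inferInstance]) ω)) |
        MeasurableSpace.comap (fun ω'' => β₁ ⬝ᵥ X ω'') inferInstance]
      =ᵐ[P] fun _ => Sig i j - (β₁ ⬝ᵥ (Sig *ᵥ β₁))⁻¹ * (Sig *ᵥ β₁) i * (Sig *ᵥ β₁) j)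
    -- slice conditional means, residuals and the influence function
    (μh : Fin H → Fin p → ℝ) (hμh : ∀ h i, μh h i = ∫ ω, X ω i ∂(P[|Y ⁻¹' S h]))
    (μyh : Fin H → ℝ) (hμyh : ∀ h, μyh h = ∫ ω, Y ω ∂(P[|Y ⁻¹' S h]))
    (Rh : Fin H → Ω → ℝ) (hRh : ∀ h ω, Rh h ω = Y ω - μyh h - b h ⬝ᵥ (X ω - μh h))
    (IF : Ω → Fin p → ℝ)
    (hIF : ∀ ω, IF ω = (1 / lam₁) •
      ∑ h, (((Y ⁻¹' S h).indicator (fun _ => (1 : ℝ)) ω) * Rh h ω * (b h ⬝ᵥ γ₁)) •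
        ((1 - Pm) *ᵥ (Sig⁻¹ *ᵥ (X ω - μ))))
    -- the required moments are finite
    (hIFint : ∀ i j, Integrable (fun ω => IF ω i * IF ω j) P)
    (hRint : ∀ h, Integrable (fun ω => Rh h ω ^ 2) (P[|Y ⁻¹' S h])) :
    ∀ i j, (∫ ω, IF ω i * IF ω j ∂P) =
      (1 / lam₁ ^ 2) * ∑ h, w h * (b h ⬝ᵥ γ₁) ^ 2 * (∫ ω, Rh h ω ^ 2 ∂(P[|Y ⁻¹' S h])) *
        (((1 - Pm) * Sig⁻¹ * (1 - Pm)) i j) :=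
  stmt_13_general P X hX hX2 Y μ Sig hSig hSigInv S hSm hdisj w hw γ₁ hγ₁ Pm hPm a ha β₁ hβ₁ c b hb
    lam₁ f hf eps heps hindep hmodel hii hiii μh μyh Rh hRh IF hIF hIFint
end

section
/- Let G be a Borel probability measure on ℝ × ℝ^p with finite second moments, w₀ = (y₀, x₀) ∈ ℝ × ℝ^p, and G_ε = (1 − ε)G + ε δ_{w₀} for ε ∈ [0, 1). Let S ⊆ ℝ be a Borel set with w = G(S × ℝ^p) > 0, and let μ_S ∈ ℝ^p and μ_{y,S} ∈ ℝ denote the conditional means of X and Y given {Y ∈ S} under G. Then the map ε ↦ Cov_{G_ε}(X, Y | Y ∈ S) is right-differentiable at ε = 0, with derivative 1{y₀ ∈ S} · (1/w) · [ (y₀ − μ_{y,S})(x₀ − μ_S) − Cov_G(X, Y | Y ∈ S) ]. -/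
open MeasureTheory ProbabilityTheory
open scoped ENNReal

/-! Under `G_ε` both the slice mass and the integral of any integrable `f` over the slice are
affine in `ε ∈ [0, 1]`, so the conditional mean of `f` given the slice `A` is a ratio of affine
functions, with right derivative `1{w₀ ∈ A} (f w₀ - E[f | A]) / G(A)` at `0`. For `ε < 1` the
slice keeps positive mass, so the conditional covariance is `E[XY | A] - E[X | A] E[Y | A]`,
and the product rule gives the claim. -/

section Contamination

variable {α : Type*} [MeasurableSpace α]

noncomputable def contamination (μ : Measure α) (w₀ : α) (ε : ℝ) : Measure α :=
  ENNReal.ofReal (1 - ε) • μ + ENNReal.ofReal ε • Measure.dirac w₀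

variable {μ : Measure α} {w₀ : α} {ε : ℝ} {A : Set α} {f : α → ℝ}

@[simp] lemma contamination_zero (μ : Measure α) (w₀ : α) : contamination μ w₀ 0 = μ := by
  simp [contamination]

lemma MeasureTheory.Integrable.contamination (hf : Integrable f μ) (hfm : Measurable f) :
    Integrable f (contamination μ w₀ ε) :=
  (hf.smul_measure ENNReal.ofReal_ne_top).add_measure
    ((integrable_dirac' hfm.stronglyMeasurable (by simp)).smul_measure ENNReal.ofReal_ne_top)

lemma MeasureTheory.MemLp.contamination (hf : MemLp f 2 μ) (hfm : Measurable f) :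
    MemLp f 2 (contamination μ w₀ ε) :=
  (memLp_two_iff_integrable_sq hfm.aestronglyMeasurable).2
    (hf.integrable_sq.contamination (hfm.pow_const 2))

lemma integral_contamination (hf : Integrable f μ) (hfm : Measurable f) (hε₀ : 0 ≤ ε)
    (hε₁ : ε ≤ 1) :
    ∫ z, f z ∂(contamination μ w₀ ε) = AffineMap.lineMap (∫ z, f z ∂μ) (f w₀) ε := by
  rw [contamination, integral_add_measure (hf.smul_measure ENNReal.ofReal_ne_top)
      ((integrable_dirac' hfm.stronglyMeasurable (by simp)).smul_measure ENNReal.ofReal_ne_top),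
    integral_smul_measure, integral_smul_measure, integral_dirac' _ _ hfm.stronglyMeasurable,
    ENNReal.toReal_ofReal (by linarith), ENNReal.toReal_ofReal hε₀, smul_eq_mul, smul_eq_mul,
    AffineMap.lineMap_apply_ring]

lemma setIntegral_contamination (hA : MeasurableSet A) (hf : Integrable f μ)
    (hfm : Measurable f) (hε₀ : 0 ≤ ε) (hε₁ : ε ≤ 1) :
    ∫ z in A, f z ∂(contamination μ w₀ ε) =
      AffineMap.lineMap (∫ z in A, f z ∂μ) (A.indicator f w₀) ε := by
  rw [← integral_indicator hA,
    integral_contamination (hf.indicator hA) (hfm.indicator hA) hε₀ hε₁, integral_indicator hA]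

lemma measureReal_contamination [IsFiniteMeasure μ] (hA : MeasurableSet A) (hε₀ : 0 ≤ ε)
    (hε₁ : ε ≤ 1) :
    (contamination μ w₀ ε).real A = AffineMap.lineMap (μ.real A) (A.indicator 1 w₀) ε := by
  rw [← integral_indicator_one hA, integral_contamination (f := A.indicator 1)
      ((integrable_const (1 : ℝ)).indicator hA) (measurable_const.indicator hA) hε₀ hε₁,
    integral_indicator_one hA]

lemma measureReal_contamination_pos [IsFiniteMeasure μ] (hA : MeasurableSet A)
    (hA₀ : 0 < μ.real A) (hε₀ : 0 ≤ ε) (hε₁ : ε < 1) : 0 < (contamination μ w₀ ε).real A := by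
  rw [measureReal_contamination hA hε₀ hε₁.le, AffineMap.lineMap_apply_ring]
  have hχ : 0 ≤ A.indicator (1 : α → ℝ) w₀ := Set.indicator_nonneg (fun _ _ ↦ zero_le_one) _
  exact add_pos_of_pos_of_nonneg (mul_pos (sub_pos.2 hε₁) hA₀) (mul_nonneg hε₀ hχ)

lemma integral_cond_eq_setIntegral_div (ν : Measure α) (A : Set α) (f : α → ℝ) :
    ∫ z, f z ∂(ν[|A]) = (∫ z in A, f z ∂ν) / ν.real A := by
  rw [ProbabilityTheory.cond, integral_smul_measure, ENNReal.toReal_inv, smul_eq_mul,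
    inv_mul_eq_div, measureReal_def]

lemma integral_cond_contamination [IsFiniteMeasure μ] (hA : MeasurableSet A)
    (hf : Integrable f μ) (hfm : Measurable f) (hε₀ : 0 ≤ ε) (hε₁ : ε ≤ 1) :
    ∫ z, f z ∂(contamination μ w₀ ε)[|A] =
      AffineMap.lineMap (∫ z in A, f z ∂μ) (A.indicator f w₀) ε /
        AffineMap.lineMap (μ.real A) (A.indicator 1 w₀) ε := by
  rw [integral_cond_eq_setIntegral_div, setIntegral_contamination hA hf hfm hε₀ hε₁,
    measureReal_contamination hA hε₀ hε₁]

lemma hasDerivAt_lineMap_div_lineMap {a b c d : ℝ} (hc : c ≠ 0) :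
    HasDerivAt (fun ε : ℝ ↦ AffineMap.lineMap a b ε / AffineMap.lineMap c d ε)
      ((b - a / c * d) / c) 0 := by
  have h := (AffineMap.hasDerivAt_lineMap (a := a) (b := b) (x := (0 : ℝ))).div
    (AffineMap.hasDerivAt_lineMap (a := c) (b := d)) (by simpa using hc)
  refine h.congr_deriv ?_
  simp only [AffineMap.lineMap_apply_zero]
  field_simp
  ring

lemma hasDerivWithinAt_integral_cond_contamination [IsFiniteMeasure μ] (hA : MeasurableSet A)
    (hA₀ : 0 < μ.real A) (hf : Integrable f μ) (hfm : Measurable f) :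
    HasDerivWithinAt (fun ε ↦ ∫ z, f z ∂(contamination μ w₀ ε)[|A])
      (A.indicator 1 w₀ / μ.real A * (f w₀ - ∫ z, f z ∂μ[|A])) (Set.Ici 0) 0 := by
  have hratio : ∀ ε ∈ Set.Icc (0 : ℝ) 1, ∫ z, f z ∂(contamination μ w₀ ε)[|A] =
      AffineMap.lineMap (∫ z in A, f z ∂μ) (A.indicator f w₀) ε /
        AffineMap.lineMap (μ.real A) (A.indicator 1 w₀) ε :=
    fun ε hε ↦ integral_cond_contamination hA hf hfm hε.1 hε.2
  refine ((hasDerivAt_lineMap_div_lineMap hA₀.ne').hasDerivWithinAt.congr_of_eventuallyEq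
    ?_ (hratio 0 ⟨le_rfl, zero_le_one⟩)).congr_deriv ?_
  · filter_upwards [Icc_mem_nhdsGE one_pos] with ε hε using hratio ε hε
  · rw [integral_cond_eq_setIntegral_div]
    by_cases hw₀ : w₀ ∈ A
    · simp only [Set.indicator_of_mem hw₀, Pi.one_apply]
      ring
    · simp [Set.indicator_of_notMem hw₀]

lemma MeasureTheory.MemLp.cond_s16 {p : ℝ≥0∞} {ν : Measure α} (hf : MemLp f p ν) (hA : ν A ≠ 0) :
    MemLp f p (ν[|A]) :=
  (hf.restrict A).smul_measure (ENNReal.inv_ne_top.2 hA)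

lemma covariance_cond_eq_sub {ν : Measure α} {X Y : α → ℝ} (hA : 0 < ν.real A)
    (hX : MemLp X 2 ν) (hY : MemLp Y 2 ν) :
    cov[X, Y; ν[|A]] = ∫ z, X z * Y z ∂ν[|A] - (∫ z, X z ∂ν[|A]) * ∫ z, Y z ∂ν[|A] := by
  obtain ⟨hA₀, hA_top⟩ := ENNReal.toReal_pos_iff.1 hA
  have := cond_isProbabilityMeasure_of_finite hA₀.ne' hA_top.ne
  exact covariance_eq_sub (hX.cond_s16 hA₀.ne') (hY.cond_s16 hA₀.ne')

theorem hasDerivWithinAt_covariance_cond_contamination [IsFiniteMeasure μ]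
    (hA : MeasurableSet A) (hA₀ : 0 < μ.real A) {X Y : α → ℝ} (hX : MemLp X 2 μ)
    (hY : MemLp Y 2 μ) (hXm : Measurable X) (hYm : Measurable Y) :
    HasDerivWithinAt (fun ε ↦ cov[X, Y; (contamination μ w₀ ε)[|A]])
      (A.indicator 1 w₀ / μ.real A * ((X w₀ - ∫ z, X z ∂μ[|A]) * (Y w₀ - ∫ z, Y z ∂μ[|A]) -
        cov[X, Y; μ[|A]])) (Set.Ici 0) 0 := by
  have hcov : ∀ ε ∈ Set.Ico (0 : ℝ) 1, cov[X, Y; (contamination μ w₀ ε)[|A]] =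
      ∫ z, X z * Y z ∂(contamination μ w₀ ε)[|A] -
        (∫ z, X z ∂(contamination μ w₀ ε)[|A]) * ∫ z, Y z ∂(contamination μ w₀ ε)[|A] :=
    fun ε hε ↦ covariance_cond_eq_sub (measureReal_contamination_pos hA hA₀ hε.1 hε.2)
      (hX.contamination hXm) (hY.contamination hYm)
  have hmean {f : α → ℝ} (hf : Integrable f μ) (hfm : Measurable f) :=
    hasDerivWithinAt_integral_cond_contamination (w₀ := w₀) hA hA₀ hf hfm
  have hderiv := (hmean (f := fun z ↦ X z * Y z) (hX.integrable_mul hY) (hXm.mul hYm)).sub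
    ((hmean (hX.integrable one_le_two) hXm).mul (hmean (hY.integrable one_le_two) hYm))
  refine (hderiv.congr_of_eventuallyEq ?_ (hcov 0 ⟨le_rfl, zero_lt_one⟩)).congr_deriv ?_
  · filter_upwards [Ico_mem_nhdsGE one_pos] with ε hε using hcov ε hε
  · simp only [contamination_zero, covariance_cond_eq_sub hA₀ hX hY]
    ring

end Contamination

/-- the fixed-slice influence function of the slice covariance: under
`ε`-contamination `G_ε = (1−ε)G + ε δ_{(y₀,x₀)}`, the map
`ε ↦ Cov_{G_ε}(X, Y | Y ∈ S)` is right-differentiable at `0` with derivative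
`1{y₀ ∈ S} (1/w) [(y₀ − μ_{y,S})(x₀ − μ_S) − Cov_G(X, Y | Y ∈ S)]`. -/
theorem stmt_16 {p : ℕ} (G : Measure (ℝ × (Fin p → ℝ))) [IsProbabilityMeasure G]
    (hG2y : MemLp (fun z : ℝ × (Fin p → ℝ) => z.1) 2 G)
    (hG2x : ∀ i, MemLp (fun z : ℝ × (Fin p → ℝ) => z.2 i) 2 G)
    (y₀ : ℝ) (x₀ : Fin p → ℝ)
    (S : Set ℝ) (hS : MeasurableSet S)
    (w : ℝ) (hw : w = (G (Prod.fst ⁻¹' S)).toReal) (hwpos : 0 < w)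
    (μS : Fin p → ℝ) (hμS : ∀ i, μS i = ∫ z, z.2 i ∂(G[|Prod.fst ⁻¹' S]))
    (μyS : ℝ) (hμyS : μyS = ∫ z, z.1 ∂(G[|Prod.fst ⁻¹' S]))
    (CovG : Fin p → ℝ)
    (hCovG : ∀ i, CovG i = ∫ z, (z.2 i - μS i) * (z.1 - μyS) ∂(G[|Prod.fst ⁻¹' S])) :
    ∀ i, HasDerivWithinAt
      (fun ε : ℝ =>
        let Gε : Measure (ℝ × (Fin p → ℝ)) :=
          ENNReal.ofReal (1 - ε) • G + ENNReal.ofReal ε • Measure.dirac (y₀, x₀)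
        ∫ z, (z.2 i - ∫ z', z'.2 i ∂(Gε[|Prod.fst ⁻¹' S])) *
            (z.1 - ∫ z', z'.1 ∂(Gε[|Prod.fst ⁻¹' S])) ∂(Gε[|Prod.fst ⁻¹' S]))
      (S.indicator (fun _ => (1 : ℝ)) y₀ * (1 / w) *
        ((y₀ - μyS) * (x₀ i - μS i) - CovG i))
      (Set.Ici 0) 0 := by
  intro i
  have hA : MeasurableSet (Prod.fst ⁻¹' S : Set (ℝ × (Fin p → ℝ))) := measurable_fst hS
  have hcov : cov[fun z ↦ z.2 i, fun z ↦ z.1; G[|Prod.fst ⁻¹' S]] = CovG i := by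
    rw [hCovG i, hμS i, hμyS]
    rfl
  have hmass : G.real (Prod.fst ⁻¹' S) = w := by rw [hw, measureReal_def]
  have key := hasDerivWithinAt_covariance_cond_contamination (w₀ := (y₀, x₀)) hA
    (hmass ▸ hwpos) (hG2x i) hG2y (by fun_prop) measurable_fst
  have hχ : (Prod.fst ⁻¹' S).indicator 1 (y₀, x₀) = S.indicator (fun _ ↦ (1 : ℝ)) y₀ := rfl
  rw [← hμS i, ← hμyS, hmass, hcov, hχ] at key
  -- the statement's `let Gε` and nested integrals are `contamination` and `cov` unfolded
  exact key.congr_deriv (by ring)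
end
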